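/- arXiv:2305.17685 — 6 statements merged into one kernel-verified Lean document; each statement's English description precedes it below -/
import Mathlib

section
/- Let n ≥ 1 and consider the symmetric group S_{n+1} with simple transpositions s_i = (i, i+1) for 1 ≤ i ≤ n. For 1 ≤ k ≤ n, define w_k := (s_1 s_2 ⋯ s_n)(s_1 s_2 ⋯ s_{n-1}) ⋯ (s_1 s_2 ⋯ s_{k+1})(s_1 s_2 ⋯ s_k). Then w_k, viewed as a permutation of {1, …, n+1}, satisfies w_k(i) = n - k + 1 + i for 1 ≤ i ≤ k, and w_k(i) = n + 2 - i for k+1 ≤ i ≤ n+1. -/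
/-- The simple transposition `s_i = (i, i+1)` as a permutation of `ℕ`. -/
def sN (i : ℕ) : Equiv.Perm ℕ := Equiv.swap i (i + 1)

/-- The product `s_1 s_2 ⋯ s_m`. -/
def blockProd (m : ℕ) : Equiv.Perm ℕ := ((List.range m).map fun t => sN (t + 1)).prod

/-- `w_k = (s_1 ⋯ s_n)(s_1 ⋯ s_{n-1}) ⋯ (s_1 ⋯ s_k)` in `S_{n+1}`. -/
def wK (n k : ℕ) : Equiv.Perm ℕ := ((List.range (n + 1 - k)).map fun r => blockProd (n - r)).prod

lemma blockProd_succ (m : ℕ) : blockProd (m + 1) = blockProd m * sN (m + 1) := by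
  simp [blockProd, List.range_succ]

lemma sN_apply_other (i x : ℕ) (h1 : x ≠ i) (h2 : x ≠ i + 1) : sN i x = x :=
  Equiv.swap_apply_of_ne_of_ne h1 h2

lemma blockProd_large (m x : ℕ) (h : m + 2 ≤ x ∨ x = 0) : blockProd m x = x := by
  induction m with
  | zero => simp [blockProd]
  | succ m ih =>
    rw [blockProd_succ, Equiv.Perm.mul_apply,
      sN_apply_other (m + 1) x (by omega) (by omega)]
    exact ih (by omega)

lemma blockProd_mid (m x : ℕ) (h1 : 1 ≤ x) (h2 : x ≤ m) : blockProd m x = x + 1 := by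
  induction m with
  | zero => omega
  | succ m ih =>
    rw [blockProd_succ, Equiv.Perm.mul_apply]
    rcases Nat.lt_or_ge x (m + 1) with h | h
    · rw [sN_apply_other (m + 1) x (by omega) (by omega)]
      exact ih (by omega)
    · have hx : x = m + 1 := by omega
      subst hx
      have : sN (m + 1) (m + 1) = m + 2 := by simp [sN]
      rw [this]
      exact blockProd_large m (m + 2) (by omega)

lemma blockProd_top (m : ℕ) : blockProd m (m + 1) = 1 := by
  induction m with
  | zero => simp [blockProd]
  | succ m ih =>
    have hs : sN (m + 1) (m + 1 + 1) = m + 1 := by simp [sN]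
    rw [blockProd_succ, Equiv.Perm.mul_apply, hs]
    exact ih

lemma wK_step (n k : ℕ) (hk : k ≤ n) : wK n k = wK n (k + 1) * blockProd k := by
  have h1 : n + 1 - k = (n - k) + 1 := by omega
  have h2 : n + 1 - (k + 1) = n - k := by omega
  rw [wK, wK, h1, h2, List.range_succ, List.map_append, List.prod_append]
  simp only [List.map_cons, List.map_nil, List.prod_cons, List.prod_nil, mul_one]
  have : n - (n - k) = k := by omega
  rw [this]

lemma main_lemma : ∀ d k n, 1 ≤ k → k + d = n →
    (∀ i, 1 ≤ i → i ≤ k → wK n k i = n - k + 1 + i) ∧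
    (∀ i, k + 1 ≤ i → i ≤ n + 1 → wK n k i = n + 2 - i) := by
  intro d
  induction d with
  | zero =>
    intro k n hk hkn
    have hnk : n = k := by omega
    have hw : wK n k = blockProd k := by simp [wK, hnk, List.range_succ]
    constructor
    · intro i h1 h2
      rw [hw, blockProd_mid k i h1 h2]
      omega
    · intro i h1 h2
      have hi : i = k + 1 := by omega
      subst hi
      rw [hw, blockProd_top]
      omega
  | succ d ih =>
    intro k n hk hkn
    have hk' : k ≤ n := by omega
    obtain ⟨H1, H2⟩ := ih (k + 1) n (by omega) (by omega)
    constructor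
    · intro i h1 h2
      rw [wK_step n k hk', Equiv.Perm.mul_apply, blockProd_mid k i h1 h2,
        H1 (i + 1) (by omega) (by omega)]
      omega
    · intro i h1 h2
      rw [wK_step n k hk', Equiv.Perm.mul_apply]
      rcases eq_or_lt_of_le h1 with h | h
      · rw [← h, blockProd_top, H1 1 le_rfl (by omega)]
        omega
      · rw [blockProd_large k i (by omega), H2 i (by omega) h2]

theorem stmt0 (n k : ℕ) (hn : 1 ≤ n) (hk1 : 1 ≤ k) (hk2 : k ≤ n) :
    (∀ i, 1 ≤ i → i ≤ k → wK n k i = n - k + 1 + i) ∧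
    (∀ i, k + 1 ≤ i → i ≤ n + 1 → wK n k i = n + 2 - i) := by
  exact main_lemma (n - k) k n hk1 (by omega)
end

section
/- Let n ≥ 1, 1 ≤ u ≤ p ≤ n and let J = {j_1 < ⋯ < j_p} ⊆ {1, …, n}. For u ≤ t ≤ j_u − 1, define β_{u,t} := (s_{j_1−1}⋯s_2 s_1)⋯(s_{j_{u−1}−1}⋯s_u s_{u−1})(s_{j_u−1}⋯s_{t+1})·α_t, where α_t = ε_t − ε_{t+1} and permutations act on P by w·ε_i = ε_{w(i)}. Then β_{u,t} = ε_{t − τ(u,t)} − ε_{j_u}, where τ(u,t) := #{1 ≤ r ≤ u−1 : t − r + 1 ≤ j_{u−r}}. -/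
/-- The descending product `s_{v-1} s_{v-2} ⋯ s_u`. -/
def cycDown (u v : ℕ) : Equiv.Perm ℕ := ((List.range (v - u)).map fun t => sN (v - 1 - t)).prod

/-- The descending product `s_{v-1} s_{v-2} ⋯ s_{t+1}`. -/
def descTo (v t : ℕ) : Equiv.Perm ℕ := ((List.range (v - 1 - t)).map fun m => sN (v - 1 - m)).prod

lemma sN_apply_self (i : ℕ) : sN i i = i + 1 := Equiv.swap_apply_left _ _

lemma sN_apply_succ (i : ℕ) : sN i (i + 1) = i := Equiv.swap_apply_right _ _

lemma descTo_eq (v t : ℕ) : descTo v t = cycDown (t + 1) v := by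
  have h : v - 1 - t = v - (t + 1) := by omega
  rw [descTo, cycDown, h]

lemma cycDown_peel {a b : ℕ} (h : a < b) :
    cycDown a b = sN (b - 1) * cycDown a (b - 1) := by
  have hb : b - a = (b - 1 - a) + 1 := by omega
  rw [cycDown, hb, List.range_succ_eq_map, List.map_cons, List.prod_cons, List.map_map]
  have hmap : (fun t => sN (b - 1 - t)) ∘ Nat.succ = fun t => sN (b - 1 - 1 - t) := by
    funext x
    simp only [Function.comp]
    congr 1
    omega
  rw [hmap]
  rfl

lemma cycDown_fix_gt : ∀ {a b : ℕ}, ∀ x, b < x → cycDown a b x = x := by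
  intro a b
  induction b using Nat.strong_induction_on with
  | _ b ih =>
    intro x hx
    by_cases hab : a < b
    · rw [cycDown_peel hab]
      simp only [Equiv.Perm.mul_apply]
      rw [ih (b-1) (by omega) x (by omega)]
      rw [sN, Equiv.swap_apply_of_ne_of_ne (by omega) (by omega)]
    · have h0 : b - a = 0 := by omega
      simp [cycDown, h0]

lemma cycDown_fix_lt : ∀ {a b : ℕ}, ∀ x, x < a → cycDown a b x = x := by
  intro a b
  induction b using Nat.strong_induction_on with
  | _ b ih =>
    intro x hx
    by_cases hab : a < b
    · rw [cycDown_peel hab]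
      simp only [Equiv.Perm.mul_apply]
      rw [ih (b-1) (by omega) x hx]
      rw [sN, Equiv.swap_apply_of_ne_of_ne (by omega) (by omega)]
    · have h0 : b - a = 0 := by omega
      simp [cycDown, h0]

lemma cycDown_mid : ∀ {a b : ℕ}, ∀ x, a < x → x ≤ b → cycDown a b x = x - 1 := by
  intro a b
  induction b using Nat.strong_induction_on with
  | _ b ih =>
    intro x hax hxb
    have hab : a < b := by omega
    rw [cycDown_peel hab, Equiv.Perm.mul_apply]
    by_cases hxb' : x ≤ b - 1
    · rw [ih (b-1) (by omega) x hax hxb']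
      rw [sN, Equiv.swap_apply_of_ne_of_ne (by omega) (by omega)]
    · have hx : x = b := by omega
      rw [hx, cycDown_fix_gt b (by omega)]
      have h2 := sN_apply_succ (b - 1)
      rw [show (b - 1) + 1 = b from by omega] at h2
      rw [h2]

lemma cycDown_start : ∀ {a b : ℕ}, a ≤ b → cycDown a b a = b := by
  intro a b
  induction b using Nat.strong_induction_on with
  | _ b ih =>
    intro hab
    by_cases hab' : a < b
    · rw [cycDown_peel hab', Equiv.Perm.mul_apply, ih (b-1) (by omega) (by omega),
        sN_apply_self]
      omega
    · have h0 : b - a = 0 := by omega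
      simp [cycDown, h0]
      omega

/-- `β_{u,t} = (s_{j_1−1}⋯s_1)⋯(s_{j_{u−1}−1}⋯s_{u−1})(s_{j_u−1}⋯s_{t+1})·α_t
equals `ε_{t−τ(u,t)} − ε_{j_u}`, where `α_t = ε_t − ε_{t+1}` and the acting permutation `π`
satisfies `π(t) = t − τ(u,t)` and `π(t+1) = j_u`, with
`τ(u,t) = #{1 ≤ r ≤ u−1 : t − r + 1 ≤ j_{u−r}}`. -/
theorem stmt8 (n p u t : ℕ) (hn : 1 ≤ n) (hu : 1 ≤ u) (hup : u ≤ p) (hp : p ≤ n)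
    (j : ℕ → ℕ) (hmono : ∀ v, 1 ≤ v → v < p → j v < j (v + 1))
    (hlow : 1 ≤ j 1) (hhigh : j p ≤ n)
    (hut : u ≤ t) (htj : t + 1 ≤ j u) :
    (((List.range (u - 1)).map fun r => cycDown (r + 1) (j (r + 1))).prod * descTo (j u) t) t =
        t - ((Finset.Icc 1 (u - 1)).filter fun r => t - r + 1 ≤ j (u - r)).card ∧
    (((List.range (u - 1)).map fun r => cycDown (r + 1) (j (r + 1))).prod * descTo (j u) t) (t + 1) =
        j u := by
  have hgap : ∀ a b : ℕ, 1 ≤ a → a ≤ b → b ≤ p → j a + (b - a) ≤ j b := by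
    intro a b ha hab
    induction b, hab using Nat.le_induction with
    | base => intro _; simp
    | succ b hb ih =>
      intro hbp
      have h1 := hmono b (by omega) (by omega)
      have h2 := ih (by omega)
      omega
  set Q : ℕ → Equiv.Perm ℕ :=
    fun m => ((List.range m).map fun r => cycDown (r + 1) (j (r + 1))).prod with hQ
  have hQpeel : ∀ m, Q (m + 1) = Q m * cycDown (m + 1) (j (m + 1)) := by
    intro m
    simp [hQ, List.range_succ]
  have hfixju : ∀ m, m ≤ u - 1 → Q m (j u) = j u := by
    intro m
    induction m with
    | zero => simp [hQ]
    | succ m ih =>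
      intro hm
      have hg := hgap (m+1) u (by omega) (by omega) hup
      rw [hQpeel, Equiv.Perm.mul_apply, cycDown_fix_gt (j u) (by omega), ih (by omega)]
  set d : ℕ → ℕ := fun w => ((Finset.Icc w (u - 1)).filter fun s => t + s + 1 ≤ j s + u).card
    with hd
  have haux : ∀ w, 1 ≤ w → w ≤ u → Q (w - 1) (t - d w) = t - d 1 := by
    intro w hw
    induction w, hw using Nat.le_induction with
    | base => intro _; simp [hQ]
    | succ w hw ih =>
      intro hwu
      have hcard : d (w + 1) ≤ u - 1 - w := by
        have h1 : d (w + 1) ≤ (Finset.Icc (w+1) (u-1)).card := Finset.card_filter_le _ _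
        rw [Nat.card_Icc] at h1
        omega
      have hins : Finset.Icc w (u-1) = insert w (Finset.Icc (w+1) (u-1)) := by
        ext x; simp only [Finset.mem_Icc, Finset.mem_insert]; omega
      have hQw : Q (w + 1 - 1) = Q (w - 1) * cycDown w (j w) := by
        have h1 : w + 1 - 1 = (w - 1) + 1 := by omega
        have h2 : w - 1 + 1 = w := by omega
        rw [h1, hQpeel, h2]
      rw [hQw, Equiv.Perm.mul_apply]
      by_cases hc : t + w + 1 ≤ j w + u
      · have hdw : d w = 1 + d (w + 1) := by
          simp only [hd]
          simp only [hins, Finset.filter_insert, if_pos hc]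
          rw [Finset.card_insert_of_notMem (by simp [Finset.mem_Icc])]
          omega
        have hfull : d (w + 1) = u - 1 - w := by
          simp only [hd]
          have heq : Finset.filter (fun s => t + s + 1 ≤ j s + u) (Finset.Icc (w+1) (u-1))
              = Finset.Icc (w+1) (u-1) := by
            apply Finset.filter_true_of_mem
            intro s hs
            simp only [Finset.mem_Icc] at hs
            have := hgap w s (by omega) (by omega) (by omega)
            omega
          rw [heq, Nat.card_Icc]
          omega
        have hmid : cycDown w (j w) (t - d (w + 1)) = t - d (w + 1) - 1 := by
          apply cycDown_mid <;> omega
        rw [hmid]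
        have he : t - d (w + 1) - 1 = t - d w := by omega
        rw [he]
        exact ih (by omega)
      · have hdw : d w = d (w + 1) := by
          simp only [hd]
          simp only [hins, Finset.filter_insert, if_neg hc]
        have hfix : cycDown w (j w) (t - d (w + 1)) = t - d (w + 1) := by
          apply cycDown_fix_gt
          omega
        rw [hfix]
        have he : t - d (w + 1) = t - d w := by omega
        rw [he]
        exact ih (by omega)
  have hdu : d u = 0 := by
    simp only [hd]
    rw [Finset.Icc_eq_empty (by omega)]
    simp
  have hdesc_t : descTo (j u) t t = t := by
    rw [descTo_eq]; exact cycDown_fix_lt t (by omega)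
  have hdesc_t1 : descTo (j u) t (t + 1) = j u := by
    rw [descTo_eq]; exact cycDown_start htj
  have hcards : d 1 = ((Finset.Icc 1 (u - 1)).filter fun r => t - r + 1 ≤ j (u - r)).card := by
    simp only [hd]
    apply Finset.card_bij' (i := fun s _ => u - s) (j := fun r _ => u - r)
    · intro s hs
      simp only [Finset.mem_filter, Finset.mem_Icc] at hs ⊢
      have hus : u - (u - s) = s := by omega
      rw [hus]
      refine ⟨⟨by omega, by omega⟩, by omega⟩
    · intro r hr
      simp only [Finset.mem_filter, Finset.mem_Icc] at hr ⊢
      refine ⟨⟨by omega, by omega⟩, by omega⟩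
    · intro s hs
      simp only [Finset.mem_filter, Finset.mem_Icc] at hs
      omega
    · intro r hr
      simp only [Finset.mem_filter, Finset.mem_Icc] at hr
      omega
  constructor
  · show (Q (u-1) * descTo (j u) t) t = _
    rw [Equiv.Perm.mul_apply, hdesc_t, ← hcards]
    have := haux u hu le_rfl
    rw [hdu, Nat.sub_zero] at this
    exact this
  · show (Q (u-1) * descTo (j u) t) (t + 1) = _
    rw [Equiv.Perm.mul_apply, hdesc_t1]
    exact hfixju (u-1) le_rfl
end

section
/- Let n ≥ 1, 1 ≤ u ≤ p ≤ n and J = {j_1 < ⋯ < j_p} ⊆ {1, …, n}. For j_u ≤ t ≤ n − p + u, define γ_{u,t} := (s_{j_p} s_{j_p+1}⋯s_n)⋯(s_{j_{u+1}} s_{j_{u+1}+1}⋯s_{n−p+u+1})(s_{j_u} s_{j_u+1}⋯s_{t−1})·α_t. Then γ_{u,t} = ε_{j_u} − ε_{t+1+σ(u,t)}, where σ(u,t) := #{u+1 ≤ r ≤ p : t + r − u ≥ j_r}. -/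
/-- The ascending product `s_a s_{a+1} ⋯ s_b`. -/
def asc (a b : ℕ) : Equiv.Perm ℕ := ((List.range (b + 1 - a)).map fun m => sN (a + m)).prod

/-- Auxiliary: the product `s_a s_{a+1} ⋯ s_{a+k-1}`. -/
def Fp (a k : ℕ) : Equiv.Perm ℕ := ((List.range k).map fun m => sN (a + m)).prod

lemma asc_eq_Fp (a b : ℕ) : asc a b = Fp a (b + 1 - a) := rfl

lemma Fp_succ (a k : ℕ) : Fp a (k + 1) = sN a * Fp (a + 1) k := by
  unfold Fp
  rw [List.range_succ_eq_map, List.map_cons, List.prod_cons, List.map_map]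
  have h : ((fun m => sN (a + m)) ∘ Nat.succ) = fun m => sN (a + 1 + m) := by
    funext m
    show sN (a + (m + 1)) = sN (a + 1 + m)
    congr 1
    omega
  rw [h, Nat.add_zero]

lemma Fp_lt (a k x : ℕ) (h : x < a) : Fp a k x = x := by
  induction k generalizing a with
  | zero => simp [Fp]
  | succ k ih =>
    rw [Fp_succ]
    simp only [Equiv.Perm.mul_apply]
    rw [ih (a + 1) (by omega)]
    exact Equiv.swap_apply_of_ne_of_ne (by omega) (by omega)

lemma Fp_gt (a k x : ℕ) (h : a + k < x) : Fp a k x = x := by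
  induction k generalizing a with
  | zero => simp [Fp]
  | succ k ih =>
    rw [Fp_succ]
    simp only [Equiv.Perm.mul_apply]
    rw [ih (a + 1) (by omega)]
    exact Equiv.swap_apply_of_ne_of_ne (by omega) (by omega)

lemma Fp_top (a k : ℕ) : Fp a k (a + k) = a := by
  induction k generalizing a with
  | zero => simp [Fp]
  | succ k ih =>
    rw [Fp_succ]
    simp only [Equiv.Perm.mul_apply]
    rw [show a + (k + 1) = (a + 1) + k from by omega, ih (a + 1)]
    exact Equiv.swap_apply_right a (a + 1)

lemma Fp_mid (a k x : ℕ) (h1 : a ≤ x) (h2 : x < a + k) : Fp a k x = x + 1 := by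
  induction k generalizing a x with
  | zero => omega
  | succ k ih =>
    rw [Fp_succ]
    simp only [Equiv.Perm.mul_apply]
    rcases eq_or_lt_of_le h1 with rfl | hlt
    · rw [Fp_lt (a + 1) k a (by omega)]
      exact Equiv.swap_apply_left a (a + 1)
    · rw [ih (a + 1) x (by omega) (by omega)]
      exact Equiv.swap_apply_of_ne_of_ne (by omega) (by omega)

lemma asc_lt (a b x : ℕ) (h : x < a) : asc a b x = x := Fp_lt _ _ _ h

lemma asc_gt (a b x : ℕ) (h1 : a < x) (h2 : b + 1 < x) : asc a b x = x :=
  Fp_gt a (b + 1 - a) x (by omega)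

lemma asc_top (a b : ℕ) (h : a ≤ b + 1) : asc a b (b + 1) = a := by
  have h := Fp_top a (b + 1 - a)
  rwa [show a + (b + 1 - a) = b + 1 from by omega, ← asc_eq_Fp] at h

lemma asc_mid (a b x : ℕ) (h1 : a ≤ x) (h2 : x ≤ b) : asc a b x = x + 1 :=
  Fp_mid a (b + 1 - a) x h1 (by omega)

/-- Counting function `σ(u,t)` truncated at `r`. -/
def cnt (j : ℕ → ℕ) (u t r : ℕ) : ℕ :=
  ((Finset.Icc (u + 1) r).filter fun s => j s ≤ t + s - u).card

lemma cnt_le (j : ℕ → ℕ) (u t r : ℕ) : cnt j u t r ≤ r - u := by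
  refine le_trans (Finset.card_filter_le _ _) ?_
  rw [Nat.card_Icc]
  omega

lemma cnt_succ (j : ℕ → ℕ) (u t r : ℕ) (h : u ≤ r) :
    cnt j u t (r + 1) = cnt j u t r + if j (r + 1) ≤ t + (r + 1) - u then 1 else 0 := by
  unfold cnt
  have hins : Finset.Icc (u + 1) (r + 1) = insert (r + 1) (Finset.Icc (u + 1) r) := by
    ext x
    simp only [Finset.mem_Icc, Finset.mem_insert]
    omega
  rw [hins, Finset.filter_insert]
  split
  · rw [Finset.card_insert_of_notMem]
    simp only [Finset.mem_filter, Finset.mem_Icc]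
    omega
  · rfl

/-- Strict monotonicity accumulated. -/
lemma jmono (p : ℕ) (j : ℕ → ℕ) (hmono : ∀ v, 1 ≤ v → v < p → j v < j (v + 1)) :
    ∀ a b, 1 ≤ a → a ≤ b → b ≤ p → j a + (b - a) ≤ j b := by
  intro a b ha hab hbp
  induction b with
  | zero => omega
  | succ b ih =>
    rcases eq_or_lt_of_le hab with rfl | h
    · simp
    · have h1 : j a + (b - a) ≤ j b := ih (by omega) (by omega)
      have h2 := hmono b (by omega) (by omega)
      omega

/-- One stage of the big product. -/
lemma step (n p u t r : ℕ) (j : ℕ → ℕ)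
    (hsm : ∀ a b, 1 ≤ a → a ≤ b → b ≤ p → j a + (b - a) ≤ j b)
    (hu : 1 ≤ u) (hur : u < r) (hrp : r ≤ p) (hp : p ≤ n)
    (htn : t ≤ n - p + u) :
    asc (j r) (n - (p - r)) (t + 1 + cnt j u t (r - 1)) = t + 1 + cnt j u t r := by
  have hC : cnt j u t (r - 1) ≤ r - 1 - u := cnt_le j u t (r - 1)
  have hsucc : cnt j u t r = cnt j u t (r - 1) + if j r ≤ t + r - u then 1 else 0 := by
    have := cnt_succ j u t (r - 1) (by omega)
    rwa [show r - 1 + 1 = r from by omega] at this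
  by_cases hcase : j r ≤ t + r - u
  · have hall : ∀ s ∈ Finset.Icc (u + 1) (r - 1), j s ≤ t + s - u := by
      intro s hs
      rw [Finset.mem_Icc] at hs
      have := hsm s r (by omega) (by omega) (by omega)
      omega
    have hCfull : cnt j u t (r - 1) = r - 1 - u := by
      unfold cnt
      rw [Finset.filter_true_of_mem hall, Nat.card_Icc]
      omega
    rw [hCfull, hsucc, hCfull, if_pos hcase]
    rw [show t + 1 + (r - 1 - u) = t + r - u from by omega]
    rw [asc_mid _ _ _ hcase (by omega)]
    omega
  · rw [asc_lt _ _ _ (by omega), hsucc, if_neg hcase]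
    omega

/-- `γ_{u,t} = (s_{j_p}⋯s_n)⋯(s_{j_{u+1}}⋯s_{n−p+u+1})(s_{j_u}⋯s_{t−1})·α_t` equals
`ε_{j_u} − ε_{t+1+σ(u,t)}`: the acting permutation `π` satisfies `π(t) = j_u` and
`π(t+1) = t + 1 + σ(u,t)`, where `σ(u,t) = #{u+1 ≤ r ≤ p : t + r − u ≥ j_r}`. -/
theorem stmt9 (n p u t : ℕ) (hn : 1 ≤ n) (hu : 1 ≤ u) (hup : u ≤ p) (hp : p ≤ n)
    (j : ℕ → ℕ) (hmono : ∀ v, 1 ≤ v → v < p → j v < j (v + 1))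
    (hlow : 1 ≤ j 1) (hhigh : j p ≤ n)
    (hjt : j u ≤ t) (htn : t ≤ n - p + u) :
    (((List.range (p - u)).map fun m => asc (j (p - m)) (n - m)).prod * asc (j u) (t - 1)) t =
        j u ∧
    (((List.range (p - u)).map fun m => asc (j (p - m)) (n - m)).prod * asc (j u) (t - 1)) (t + 1) =
        t + 1 + ((Finset.Icc (u + 1) p).filter fun r => j r ≤ t + r - u).card := by
  have hsm := jmono p j hmono
  have hju1 : 1 ≤ j u := by
    have := hsm 1 u le_rfl hu hup
    omega
  have ht1 : 1 ≤ t := le_trans hju1 hjt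
  -- the big product fixes j u
  have fixju : ∀ d, d ≤ p - u →
      (((List.range d).map fun m => asc (j (p - m)) (n - m)).prod) (j u) = j u := by
    intro d
    induction d with
    | zero => intro _; simp
    | succ d ih =>
      intro hd
      rw [List.range_succ, List.map_append, List.prod_append]
      simp only [List.map_cons, List.map_nil, List.prod_cons, List.prod_nil, mul_one,
        Equiv.Perm.mul_apply]
      have hlt : j u < j (p - d) := by
        have := hsm u (p - d) hu (by omega) (by omega)
        omega
      rw [asc_lt _ _ _ hlt]
      exact ih (by omega)
  -- the big product moves t+1+cnt(p-d) to t+1+cnt p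
  have main : ∀ d, d ≤ p - u →
      (((List.range d).map fun m => asc (j (p - m)) (n - m)).prod)
        (t + 1 + cnt j u t (p - d)) = t + 1 + cnt j u t p := by
    intro d
    induction d with
    | zero => intro _; simp
    | succ d ih =>
      intro hd
      rw [List.range_succ, List.map_append, List.prod_append]
      simp only [List.map_cons, List.map_nil, List.prod_cons, List.prod_nil, mul_one,
        Equiv.Perm.mul_apply]
      rw [show p - (d + 1) = (p - d) - 1 from by omega,
        show n - d = n - (p - (p - d)) from by omega,
        step n p u t (p - d) j hsm hu (by omega) (by omega) hp htn]
      exact ih (by omega)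
  constructor
  · rw [Equiv.Perm.mul_apply]
    have h1 : asc (j u) (t - 1) t = j u := by
      have := asc_top (j u) (t - 1) (by omega)
      rwa [show t - 1 + 1 = t from by omega] at this
    rw [h1]
    exact fixju (p - u) le_rfl
  · rw [Equiv.Perm.mul_apply]
    have h1 : asc (j u) (t - 1) (t + 1) = t + 1 := asc_gt _ _ _ (by omega) (by omega)
    rw [h1]
    have h2 : cnt j u t (p - (p - u)) = 0 := by
      unfold cnt
      rw [show p - (p - u) = u from by omega]
      simp
    have h3 := main (p - u) le_rfl
    rw [h2] at h3
    exact h3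
end

section
/- Fix n ≥ 1, 1 ≤ k ≤ n, and J = {j_1 < ⋯ < j_p} ⊆ {1, …, k} with j_1 ≥ 2. Let w_{k+1} ∈ S_{n+1} be the permutation with w_{k+1}(i) = n−k+i for 1 ≤ i ≤ k+1 and w_{k+1}(i) = n+2−i for k+2 ≤ i ≤ n+1. Then the sequence of transpositions (j_1−1, j_1), (j_1−2, j_1), …, (k_r, j_1) applied successively to w_{k+1} gives a path w_{k+1} = x_0 → x_1 → ⋯ → x_r in the Bruhat order (each step increasing length by 1) if and only if k_1 = j_1 − 1, k_2 = j_1 − 2, …, k_r = j_1 − r, where r ≥ 0 and j_1 − 1 ≥ k_1 > k_2 > ⋯ > k_r ≥ 1 and x_m = x_{m−1}·(k_m, j_1). -/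
set_option maxHeartbeats 2000000

/-- The number of inversions of `w` on `{1, …, N}`. -/
def invCount (N : ℕ) (w : Equiv.Perm ℕ) : ℕ :=
  (((Finset.Icc 1 N) ×ˢ (Finset.Icc 1 N)).filter fun p => p.1 < p.2 ∧ w p.2 < w p.1).card

open Finset in
lemma invCount_mul_swap (N a b : ℕ) (u : Equiv.Perm ℕ) (ha : 1 ≤ a) (hab : a < b)
    (hbN : b ≤ N) (hu : u a < u b) :
    invCount N (u * Equiv.swap a b) =
      invCount N u + 2 * (((Finset.Ioo a b).filter fun t => u a < u t ∧ u t < u b).card) + 1 := by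
  have haS : a ∈ Finset.Icc 1 N := by simp; omega
  have hbS : b ∈ Finset.Icc 1 N := by simp; omega
  set S : Finset ℕ := Finset.Icc 1 N with hS
  set S' : Finset ℕ := (S.erase a).erase b with hS'
  have hbSa : b ∈ S.erase a := by
    rw [Finset.mem_erase]; exact ⟨Nat.ne_of_gt hab, hbS⟩
  have split : ∀ h : ℕ → ℕ, ∑ x ∈ S, h x = h a + (h b + ∑ x ∈ S', h x) := by
    intro h
    rw [hS', Finset.add_sum_erase _ h hbSa, Finset.add_sum_erase _ h haS]
  have memS' : ∀ y ∈ S', y ∈ S ∧ y ≠ a ∧ y ≠ b := by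
    intro y hy
    rw [hS', Finset.mem_erase, Finset.mem_erase] at hy
    tauto
  have expand : ∀ v : Equiv.Perm ℕ, invCount N v =
      (if a < b ∧ v b < v a then 1 else 0)
      + ∑ y ∈ S', ((if a < y ∧ v y < v a then 1 else 0) + (if b < y ∧ v y < v b then 1 else 0)
          + ((if y < a ∧ v a < v y then 1 else 0) + (if y < b ∧ v b < v y then 1 else 0)))
      + ∑ x ∈ S', ∑ y ∈ S', (if x < y ∧ v y < v x then 1 else 0) := by
    intro v
    have h1 : invCount N v = ∑ x ∈ S, ∑ y ∈ S, (if x < y ∧ v y < v x then 1 else 0) := by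
      simp only [invCount, Finset.card_filter, Finset.sum_product, hS]
    rw [h1]
    have h2 : ∀ x, ∑ y ∈ S, (if x < y ∧ v y < v x then 1 else 0)
        = (if x < a ∧ v a < v x then 1 else 0) + ((if x < b ∧ v b < v x then 1 else 0)
          + ∑ y ∈ S', (if x < y ∧ v y < v x then 1 else 0)) := fun x => split _
    rw [Finset.sum_congr rfl (fun x _ => h2 x), split]
    rw [if_neg (show ¬(a < a ∧ v a < v a) by simp), if_neg (show ¬(b < b ∧ v b < v b) by simp),
      if_neg (show ¬(b < a ∧ v a < v b) by omega)]
    simp only [Finset.sum_add_distrib]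
    ring
  have mulapp : ∀ z, (u * Equiv.swap a b) z = u (Equiv.swap a b z) := fun z => rfl
  rw [expand (u * Equiv.swap a b), expand u]
  simp only [mulapp, Equiv.swap_apply_left, Equiv.swap_apply_right]
  rw [if_pos ⟨hab, hu⟩, if_neg (by omega)]
  have hD : (∑ x ∈ S', ∑ y ∈ S', (if x < y ∧ u (Equiv.swap a b y) < u (Equiv.swap a b x) then 1 else 0))
      = ∑ x ∈ S', ∑ y ∈ S', (if x < y ∧ u y < u x then 1 else 0) := by
    refine Finset.sum_congr rfl fun x hx => Finset.sum_congr rfl fun y hy => ?_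
    obtain ⟨_, hxa, hxb⟩ := memS' x hx
    obtain ⟨_, hya, hyb⟩ := memS' y hy
    rw [Equiv.swap_apply_of_ne_of_ne hxa hxb, Equiv.swap_apply_of_ne_of_ne hya hyb]
  rw [hD]
  have hMset : ((Finset.Ioo a b).filter fun t => u a < u t ∧ u t < u b)
      = S'.filter fun y => a < y ∧ y < b ∧ (u a < u y ∧ u y < u b) := by
    ext t
    simp only [Finset.mem_filter, Finset.mem_Ioo, hS', Finset.mem_erase, hS, Finset.mem_Icc]
    constructor
    · rintro ⟨⟨h1, h2⟩, h3⟩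
      exact ⟨⟨by omega, by omega, by omega⟩, h1, h2, h3⟩
    · rintro ⟨_, h1, h2, h3⟩
      exact ⟨⟨h1, h2⟩, h3⟩
  rw [hMset, Finset.card_filter, Finset.mul_sum]
  have key : (∑ y ∈ S', ((if a < y ∧ u (Equiv.swap a b y) < u b then 1 else 0)
          + (if b < y ∧ u (Equiv.swap a b y) < u a then 1 else 0)
          + ((if y < a ∧ u b < u (Equiv.swap a b y) then 1 else 0)
            + (if y < b ∧ u a < u (Equiv.swap a b y) then 1 else 0))))
      = (∑ y ∈ S', ((if a < y ∧ u y < u a then 1 else 0) + (if b < y ∧ u y < u b then 1 else 0)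
          + ((if y < a ∧ u a < u y then 1 else 0) + (if y < b ∧ u b < u y then 1 else 0))))
        + ∑ y ∈ S', 2 * (if a < y ∧ y < b ∧ (u a < u y ∧ u y < u b) then 1 else 0) := by
    rw [← Finset.sum_add_distrib]
    refine Finset.sum_congr rfl fun y hy => ?_
    obtain ⟨_, hya, hyb⟩ := memS' y hy
    have h1 : u y ≠ u a := fun h => hya (u.injective h)
    have h2 : u y ≠ u b := fun h => hyb (u.injective h)
    have h1 : u y ≠ u a := fun h => hya (u.injective h)
    have h2 : u y ≠ u b := fun h => hyb (u.injective h)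
    rw [Equiv.swap_apply_of_ne_of_ne hya hyb]
    split_ifs <;> omega
  omega

/-- Successively right-multiplying `w_{k+1}` by the transpositions `(k_1, j_1), …, (k_r, j_1)`
(with `j_1 − 1 ≥ k_1 > ⋯ > k_r ≥ 1`) gives a path in the Bruhat order (each step increasing
the length by exactly `1`) if and only if `k_m = j_1 − m` for all `1 ≤ m ≤ r`. -/
theorem stmt10 (n k j1 r : ℕ) (kk : ℕ → ℕ) (w : Equiv.Perm ℕ)
    (hk1 : 1 ≤ k) (hkn : k ≤ n) (hj1 : 2 ≤ j1) (hj1k : j1 ≤ k)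
    (hw1 : ∀ i, 1 ≤ i → i ≤ k + 1 → w i = n - k + i)
    (hw2 : ∀ i, k + 2 ≤ i → i ≤ n + 1 → w i = n + 2 - i)
    (hw3 : ∀ m, m = 0 ∨ n + 1 < m → w m = m)
    (hdec : ∀ m, 1 ≤ m → m < r → kk (m + 1) < kk m)
    (hrange : ∀ m, 1 ≤ m → m ≤ r → 1 ≤ kk m ∧ kk m ≤ j1 - 1) :
    let x : ℕ → Equiv.Perm ℕ :=
      fun m => w * ((List.range m).map fun t => Equiv.swap (kk (t + 1)) j1).prod
    ((∀ m, 1 ≤ m → m ≤ r → invCount (n + 1) (x m) = invCount (n + 1) (x (m - 1)) + 1) ↔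
      (∀ m, 1 ≤ m → m ≤ r → kk m = j1 - m)) := by
  intro x
  have hx : ∀ m, x m = w * ((List.range m).map fun t => Equiv.swap (kk (t + 1)) j1).prod :=
    fun m => rfl
  have hx0 : x 0 = w := by rw [hx]; simp
  have hxsucc : ∀ m, x (m + 1) = x m * Equiv.swap (kk (m + 1)) j1 := by
    intro m
    rw [hx, hx, List.range_succ, List.map_append, List.prod_append, List.map_singleton,
      List.prod_singleton, mul_assoc]
  -- monotonicity of kk
  have hmono : ∀ i m, 1 ≤ i → i ≤ m → m ≤ r → kk m ≤ kk i := by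
    intro i m h1 him hmr
    induction m with
    | zero => omega
    | succ p ih =>
      rcases Nat.lt_or_ge i (p + 1) with h | h
      · have hd := hdec p (by omega) (by omega)
        have := ih (by omega) (by omega)
        omega
      · have : i = p + 1 := by omega
        rw [this]
  have hstrict : ∀ i m, 1 ≤ i → i < m → m ≤ r → kk m < kk i := by
    intro i m h1 him hmr
    have h1' := hdec i h1 (by omega)
    have h2' := hmono (i + 1) m (by omega) (by omega) hmr
    omega
  -- w is strictly increasing on [1, k+1]
  have hwlt : ∀ p q, 1 ≤ p → p ≤ k + 1 → 1 ≤ q → q ≤ k + 1 → (w p < w q ↔ p < q) := by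
    intro p q hp1 hp2 hq1 hq2
    rw [hw1 p hp1 hp2, hw1 q hq1 hq2]
    omega
  -- description of x m
  have hdesc : ∀ m, m ≤ r →
      ((1 ≤ m → x m j1 = w (kk m)) ∧
       (1 ≤ m → x m (kk 1) = w j1) ∧
       (∀ i, 2 ≤ i → i ≤ m → x m (kk i) = w (kk (i - 1))) ∧
       (∀ z, (∀ i, 1 ≤ i → i ≤ m → z ≠ kk i) → z ≠ j1 → x m z = w z)) := by
    intro m
    induction m with
    | zero =>
      intro _
      exact ⟨fun h => by omega, fun h => by omega, fun i h2 h0 => by omega,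
        fun z _ _ => by rw [hx0]⟩
    | succ p ih =>
      intro hpr
      obtain ⟨ihA, ihB, ihC, ihD⟩ := ih (by omega)
      have hs := hxsucc p
      have hkp1 := hrange (p + 1) (by omega) hpr
      have hkp1j : kk (p + 1) ≠ j1 := by omega
      have happ : ∀ z, x (p + 1) z = x p (Equiv.swap (kk (p + 1)) j1 z) := by
        intro z; rw [hs]; rfl
      refine ⟨?_, ?_, ?_, ?_⟩
      · intro _
        rw [happ, Equiv.swap_apply_right]
        rcases Nat.eq_zero_or_pos p with h0 | hp0
        · rw [h0, hx0]
        · refine ihD _ (fun i hi1 hip => ?_) hkp1j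
          have := hstrict i (p + 1) hi1 (by omega) hpr
          omega
      · intro _
        rcases Nat.eq_zero_or_pos p with h0 | hp0
        · rw [happ, h0]
          rw [show kk (0 + 1) = kk 1 from rfl, Equiv.swap_apply_left, hx0]
        · have hne : kk 1 ≠ kk (p + 1) := by
            have := hstrict 1 (p + 1) (by omega) (by omega) hpr
            omega
          have hne2 : kk 1 ≠ j1 := by
            have := hrange 1 (by omega) (by omega)
            omega
          rw [happ, Equiv.swap_apply_of_ne_of_ne hne hne2]
          exact ihB (by omega)
      · intro i h2 hip1
        rcases Nat.eq_or_lt_of_le hip1 with he | hlt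
        · rw [he, happ, Equiv.swap_apply_left]
          have := ihA (by omega)
          rw [show p + 1 - 1 = p from rfl]
          exact this
        · have hne : kk i ≠ kk (p + 1) := by
            have := hstrict i (p + 1) (by omega) (by omega) hpr
            omega
          have hne2 : kk i ≠ j1 := by
            have := hrange i (by omega) (by omega)
            omega
          rw [happ, Equiv.swap_apply_of_ne_of_ne hne hne2]
          exact ihC i h2 (by omega)
      · intro z hz hzj
        have hne : z ≠ kk (p + 1) := hz (p + 1) (by omega) (by omega)
        rw [happ, Equiv.swap_apply_of_ne_of_ne hne hzj]
        exact ihD z (fun i hi1 hip => hz i hi1 (by omega)) hzj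
  -- the key step formula
  have hstep : ∀ m, 1 ≤ m → m ≤ r →
      invCount (n + 1) (x m) + 1 =
        invCount (n + 1) (x (m - 1)) + 2 * ((if m = 1 then j1 else kk (m - 1)) - kk m) := by
    intro m h1 hmr
    obtain ⟨hA, hB, hC, hD⟩ := hdesc (m - 1) (by omega)
    have hkm := hrange m h1 hmr
    set u : Equiv.Perm ℕ := x (m - 1) with hu
    set prev : ℕ := if m = 1 then j1 else kk (m - 1) with hprev
    have hprevk : kk m < prev ∧ prev ≤ j1 := by
      rcases Nat.eq_or_lt_of_le h1 with he | hlt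
      · rw [hprev, if_pos he.symm]; omega
      · rw [hprev, if_neg (by omega)]
        have := hstrict (m - 1) m (by omega) (by omega) hmr
        have := hrange (m - 1) (by omega) (by omega)
        omega
    -- values of u at kk m and j1
    have hua : u (kk m) = w (kk m) := by
      refine hD _ (fun i hi1 him1 => ?_) (by omega)
      have := hstrict i m hi1 (by omega) hmr
      omega
    have hub : u j1 = w prev := by
      rcases Nat.eq_or_lt_of_le h1 with he | hlt
      · rw [hprev, if_pos he.symm, hu, show m - 1 = 0 by omega, hx0]
      · rw [hprev, if_neg (by omega)]
        exact hA (by omega)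
    have hxm : x m = u * Equiv.swap (kk m) j1 := by
      rw [hu, show m = m - 1 + 1 by omega, hxsucc (m - 1), show m - 1 + 1 = m by omega]
    have huab : u (kk m) < u j1 := by
      rw [hua, hub, hwlt _ _ (by omega) (by omega) (by omega) (by omega)]
      omega
    have hswap := invCount_mul_swap (n + 1) (kk m) j1 u (by omega) (by omega) (by omega) huab
    rw [← hxm] at hswap
    -- compute the middle count
    have hMset : ((Finset.Ioo (kk m) j1).filter fun t => u (kk m) < u t ∧ u t < u j1)
        = Finset.Ioo (kk m) prev := by
      ext t
      simp only [Finset.mem_filter, Finset.mem_Ioo]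
      constructor
      · rintro ⟨⟨ht1, ht2⟩, hv1, hv2⟩
        refine ⟨ht1, ?_⟩
        by_cases hsp : ∃ i, 1 ≤ i ∧ i ≤ m - 1 ∧ t = kk i
        · obtain ⟨i, hi1, him, hti⟩ := hsp
          exfalso
          rcases Nat.eq_or_lt_of_le hi1 with he | hi2
          · -- i = 1 : u t = w j1
            rw [hti, ← he, hB (by omega), hub,
              hwlt _ _ (by omega) (by omega) (by omega) (by omega)] at hv2
            omega
          · -- i ≥ 2 : u t = w (kk (i-1))
            rw [hti, hC i (by omega) him, hub] at hv2
            have hr1 := hrange (i - 1) (by omega) (by omega)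
            rw [hwlt _ _ (by omega) (by omega) (by omega) (by omega)] at hv2
            -- kk (i - 1) < prev, but prev = kk (m-1) ≤ kk (i-1) since m ≥ 2 here
            have hm2 : 2 ≤ m := by omega
            rw [hprev, if_neg (by omega)] at hv2
            have := hmono (i - 1) (m - 1) (by omega) (by omega) (by omega)
            omega
        · push_neg at hsp
          have hut : u t = w t := hD t (fun i hi1 him1 => hsp i hi1 him1) (by omega)
          rw [hut, hub, hwlt _ _ (by omega) (by omega) (by omega) (by omega)] at hv2
          exact hv2
      · rintro ⟨ht1, ht2⟩
        have htj : t < j1 := by omega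
        have hut : u t = w t := by
          refine hD t (fun i hi1 him1 => ?_) (by omega)
          have hle := hmono i (m - 1) hi1 him1 (by omega)
          have hm2 : 2 ≤ m := by omega
          rw [hprev, if_neg (by omega)] at ht2
          omega
        constructor
        · exact ⟨ht1, htj⟩
        · rw [hut, hua, hub, hwlt _ _ (by omega) (by omega) (by omega) (by omega),
            hwlt _ _ (by omega) (by omega) (by omega) (by omega)]
          omega
    rw [hMset, Nat.card_Ioo] at hswap
    omega
  -- conclude
  constructor
  · intro hpath
    intro m
    induction m with
    | zero => omega
    | succ p ih =>
      intro _ hpr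
      have hst := hstep (p + 1) (by omega) hpr
      have hpa := hpath (p + 1) (by omega) hpr
      have hkp1 := hrange (p + 1) (by omega) hpr
      rcases Nat.eq_zero_or_pos p with h0 | hp1
      · rw [h0] at hst hpa ⊢
        rw [if_pos rfl] at hst
        simp only [Nat.add_sub_cancel] at hst hpa
        omega
      · have hkp := ih (by omega) (by omega)
        rw [if_neg (by omega)] at hst
        simp only [Nat.add_sub_cancel] at hst hpa
        have hd := hdec p hp1 (by omega)
        omega
  · intro hkk m h1 hmr
    have hst := hstep m h1 hmr
    have hkm := hrange m h1 hmr
    have hv := hkk m h1 hmr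
    rcases Nat.eq_or_lt_of_le h1 with he | hlt
    · rw [if_pos he.symm] at hst
      omega
    · rw [if_neg (by omega)] at hst
      have hv' := hkk (m - 1) (by omega) (by omega)
      omega
end

section
/- Fix n ≥ 1 and 1 ≤ k ≤ n. Let w_{k+1} ∈ S_{n+1} be given by w_{k+1}(i) = n−k+i for 1 ≤ i ≤ k+1 and w_{k+1}(i) = n+2−i for k+2 ≤ i ≤ n+1, and let w_k ∈ S_{n+1} be given by w_k(i) = n−k+1+i for 1 ≤ i ≤ k and w_k(i) = n+2−i for k+1 ≤ i ≤ n+1. Then in the quantum Bruhat graph of S_{n+1}, the path w_{k+1} → w_{k+1}s_{(k−1,k)} → ⋯ obtained by successively multiplying on the right by the transpositions (k−1,k), (k−2,k), …, (1,k) consists entirely of Bruhat edges (each step increases the length by 1), and the resulting endpoint x satisfies x s_{(k,k+1)} ≥ x in Bruhat order with ℓ(x s_{(k,k+1)}) = ℓ(x) + 1. -/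
/-- Multiplying by a transposition swapping positions with consecutive values adds one inversion. -/
lemma invCount_consec (N a b : ℕ) (u : Equiv.Perm ℕ) (ha1 : 1 ≤ a) (hbN : b ≤ N)
    (hab : a < b) (hv : u b = u a + 1) :
    invCount N (u * Equiv.swap a b) = invCount N u + 1 := by
  classical
  unfold invCount
  have hs : ∀ x : ℕ, Equiv.swap a b x = if x = a then b else if x = b then a else x := by
    intro x
    split_ifs with h1 h2
    · rw [h1, Equiv.swap_apply_left]
    · rw [h2, Equiv.swap_apply_right]
    · exact Equiv.swap_apply_of_ne_of_ne h1 h2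
  have hset : (((Finset.Icc 1 N) ×ˢ (Finset.Icc 1 N)).filter fun p =>
        p.1 < p.2 ∧ (u * Equiv.swap a b) p.2 < (u * Equiv.swap a b) p.1)
      = insert (a, b) (((Finset.Icc 1 N) ×ˢ (Finset.Icc 1 N)).filter fun p =>
        p.1 < p.2 ∧ u p.2 < u p.1) := by
    ext ⟨p, q⟩
    have e1 : p = a ↔ u p = u a := ⟨fun h => by rw [h], fun h => u.injective h⟩
    have e2 : p = b ↔ u p = u b := ⟨fun h => by rw [h], fun h => u.injective h⟩
    have e3 : q = a ↔ u q = u a := ⟨fun h => by rw [h], fun h => u.injective h⟩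
    have e4 : q = b ↔ u q = u b := ⟨fun h => by rw [h], fun h => u.injective h⟩
    simp only [Finset.mem_filter, Finset.mem_insert, Finset.mem_product, Finset.mem_Icc,
      Equiv.Perm.mul_apply, Prod.mk.injEq, hs]
    split_ifs <;> omega
  rw [hset, Finset.card_insert_of_notMem]
  simp only [Finset.mem_filter, Finset.mem_product, Finset.mem_Icc, not_and]
  intro _ _
  omega

/-- Multiplying by an adjacent transposition at an ascent adds one inversion. -/
lemma invCount_adj (N a : ℕ) (u : Equiv.Perm ℕ) (ha1 : 1 ≤ a) (hbN : a + 1 ≤ N)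
    (hlt : u a < u (a + 1)) :
    invCount N (u * Equiv.swap a (a + 1)) = invCount N u + 1 := by
  classical
  unfold invCount
  set s : Equiv.Perm ℕ := Equiv.swap a (a + 1) with hsdef
  have hs : ∀ x : ℕ, s x = if x = a then a + 1 else if x = a + 1 then a else x := by
    intro x
    split_ifs with h1 h2
    · rw [hsdef, h1, Equiv.swap_apply_left]
    · rw [hsdef, h2, Equiv.swap_apply_right]
    · exact Equiv.swap_apply_of_ne_of_ne h1 h2
  have hss : ∀ x : ℕ, s (s x) = x := fun x => Equiv.swap_apply_self a (a + 1) x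
  set U := ((Finset.Icc 1 N) ×ˢ (Finset.Icc 1 N)).filter
      (fun p : ℕ × ℕ => p.1 < p.2 ∧ u p.2 < u p.1) with hU
  set V := ((Finset.Icc 1 N) ×ˢ (Finset.Icc 1 N)).filter
      (fun p : ℕ × ℕ => p.1 < p.2 ∧ (u * s) p.2 < (u * s) p.1) with hV
  have hmemU : ∀ p q : ℕ, (p, q) ∈ U ↔
      ((1 ≤ p ∧ p ≤ N) ∧ (1 ≤ q ∧ q ≤ N)) ∧ p < q ∧ u q < u p := by
    intro p q
    simp [hU, Finset.mem_filter]
  have hmemV : ∀ p q : ℕ, (p, q) ∈ V ↔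
      ((1 ≤ p ∧ p ≤ N) ∧ (1 ≤ q ∧ q ≤ N)) ∧ p < q ∧ u (s q) < u (s p) := by
    intro p q
    rw [hV, Finset.mem_filter]
    simp [Equiv.Perm.mul_apply]
  have hnot : ((a, a + 1) : ℕ × ℕ) ∉ U := by
    rw [hmemU]; omega
  show V.card = U.card + 1
  rw [← Finset.card_insert_of_notMem hnot]
  set g : ℕ × ℕ → ℕ × ℕ := fun p => if p = (a, a + 1) then p else (s p.1, s p.2) with hg
  have hsmem : ∀ x : ℕ, 1 ≤ x → x ≤ N → 1 ≤ s x ∧ s x ≤ N := by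
    intro x h1 h2; rw [hs]; split_ifs <;> omega
  have hord : ∀ p q : ℕ, p < q → ¬(p = a ∧ q = a + 1) → s p < s q := by
    intro p q h1 h2; rw [hs, hs]; split_ifs <;> omega
  apply Finset.card_nbij' g g
  · rintro ⟨p, q⟩ hp
    rw [Finset.mem_coe, hmemV] at hp
    by_cases hpq : ((p, q) : ℕ × ℕ) = (a, a + 1)
    · rw [Prod.mk.injEq] at hpq
      obtain ⟨rfl, rfl⟩ := hpq
      simp only [hg, if_pos rfl]
      exact Finset.mem_insert_self _ _
    · simp only [hg, if_neg hpq]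
      apply Finset.mem_insert_of_mem
      rw [hmemU]
      have hne : ¬(p = a ∧ q = a + 1) := by
        intro h; exact hpq (by rw [h.1, h.2])
      exact ⟨⟨hsmem p hp.1.1.1 hp.1.1.2, hsmem q hp.1.2.1 hp.1.2.2⟩,
        hord p q hp.2.1 hne, hp.2.2⟩
  · rintro ⟨p, q⟩ hp
    by_cases hpq : ((p, q) : ℕ × ℕ) = (a, a + 1)
    · rw [Prod.mk.injEq] at hpq
      obtain ⟨rfl, rfl⟩ := hpq
      simp only [hg, if_pos rfl]
      rw [Finset.mem_coe, hmemV]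
      have h1 : s p = p + 1 := by rw [hs]; simp
      have h2 : s (p + 1) = p := by rw [hs]; split_ifs <;> omega
      refine ⟨⟨⟨ha1, by omega⟩, ⟨by omega, hbN⟩⟩, by omega, ?_⟩
      rw [h1, h2]; exact hlt
    · have hp' : (p, q) ∈ U := by
        rcases Finset.mem_insert.mp hp with h | h
        · exact absurd h hpq
        · exact h
      rw [hmemU] at hp'
      simp only [hg, if_neg hpq]
      rw [Finset.mem_coe, hmemV]
      have hne : ¬(p = a ∧ q = a + 1) := by
        intro h; exact hpq (by rw [h.1, h.2])
      refine ⟨⟨hsmem p hp'.1.1.1 hp'.1.1.2, hsmem q hp'.1.2.1 hp'.1.2.2⟩,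
        hord p q hp'.2.1 hne, ?_⟩
      rw [hss, hss]; exact hp'.2.2
  · rintro ⟨p, q⟩ hp
    by_cases hpq : ((p, q) : ℕ × ℕ) = (a, a + 1)
    · rw [Prod.mk.injEq] at hpq
      obtain ⟨rfl, rfl⟩ := hpq
      simp [hg]
    · simp only [hg, if_neg hpq]
      have h2 : ((s p, s q) : ℕ × ℕ) ≠ (a, a + 1) := by
        intro h
        rw [Finset.mem_coe, hmemV] at hp
        have hp1 : s p = a := congrArg Prod.fst h
        have hq1 : s q = a + 1 := congrArg Prod.snd h
        have hpv : p = s a := by rw [← hp1, hss]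
        have hq' : q = s (a + 1) := by rw [← hq1, hss]
        have ha' : s a = a + 1 := by rw [hs]; simp
        have hb' : s (a + 1) = a := by rw [hs]; split_ifs <;> omega
        rw [ha'] at hpv; rw [hb'] at hq'
        have := hp.2.1
        omega
      simp only [if_neg h2, hss]
  · rintro ⟨p, q⟩ hp
    by_cases hpq : ((p, q) : ℕ × ℕ) = (a, a + 1)
    · rw [Prod.mk.injEq] at hpq
      obtain ⟨rfl, rfl⟩ := hpq
      simp [hg]
    · have hp' : (p, q) ∈ U := by
        rcases Finset.mem_insert.mp hp with h | h
        · exact absurd h hpq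
        · exact h
      rw [hmemU] at hp'
      simp only [hg, if_neg hpq]
      have h2 : ((s p, s q) : ℕ × ℕ) ≠ (a, a + 1) := by
        intro h
        have hp1 : s p = a := congrArg Prod.fst h
        have hq1 : s q = a + 1 := congrArg Prod.snd h
        have hpv : p = s a := by rw [← hp1, hss]
        have hq' : q = s (a + 1) := by rw [← hq1, hss]
        have ha' : s a = a + 1 := by rw [hs]; simp
        have hb' : s (a + 1) = a := by rw [hs]; split_ifs <;> omega
        rw [ha'] at hpv; rw [hb'] at hq'
        have := hp'.2.1
        omega
      simp only [if_neg h2, hss]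

/-- Starting from `w_{k+1}` and successively right-multiplying by the transpositions
`(k−1,k), (k−2,k), …, (1,k)`, every step is a Bruhat edge (length increases by `1`), and the
endpoint `x` further satisfies `ℓ(x·(k,k+1)) = ℓ(x) + 1`.  (This is the path
`𝐪 = [(k−1,k),…,(1,k) | (k,k+1)]`.) -/
theorem stmt11 (n k : ℕ) (w : Equiv.Perm ℕ)
    (hk1 : 1 ≤ k) (hkn : k ≤ n)
    (hw1 : ∀ i, 1 ≤ i → i ≤ k + 1 → w i = n - k + i)
    (hw2 : ∀ i, k + 2 ≤ i → i ≤ n + 1 → w i = n + 2 - i)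
    (hw3 : ∀ m, m = 0 ∨ n + 1 < m → w m = m) :
    let y : ℕ → Equiv.Perm ℕ :=
      fun m => w * ((List.range m).map fun t => Equiv.swap (k - 1 - t) k).prod
    (∀ m, 1 ≤ m → m ≤ k - 1 → invCount (n + 1) (y m) = invCount (n + 1) (y (m - 1)) + 1) ∧
    invCount (n + 1) (y (k - 1) * Equiv.swap k (k + 1)) = invCount (n + 1) (y (k - 1)) + 1 := by
  intro y
  have hstep : ∀ m : ℕ, 1 ≤ m → y m = y (m - 1) * Equiv.swap (k - m) k := by
    intro m hm
    obtain ⟨m', rfl⟩ : ∃ m', m = m' + 1 := ⟨m - 1, by omega⟩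
    simp only [y, Nat.add_sub_cancel]
    rw [List.range_succ, List.map_append, List.prod_append]
    simp only [List.map_cons, List.map_nil, List.prod_cons, List.prod_nil, mul_one]
    rw [← mul_assoc]
    have harg : k - 1 - m' = k - (m' + 1) := by omega
    rw [harg]
  have hval : ∀ m : ℕ, m ≤ k - 1 →
      (∀ j, 1 ≤ j → j < k - m → y m j = w j) ∧ y m k = n - m ∧ y m (k + 1) = n + 1 := by
    intro m
    induction m with
    | zero =>
      intro _
      have hy0 : y 0 = w := by simp [y]
      refine ⟨fun j _ _ => by rw [hy0], ?_, ?_⟩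
      · rw [hy0, hw1 k hk1 (by omega)]; omega
      · rw [hy0, hw1 (k + 1) (by omega) (by omega)]; omega
    | succ m' ih =>
      intro hm
      have ih' := ih (by omega)
      have hst := hstep (m' + 1) (by omega)
      rw [Nat.add_sub_cancel] at hst
      refine ⟨?_, ?_, ?_⟩
      · intro j hj1 hj2
        rw [hst, Equiv.Perm.mul_apply, Equiv.swap_apply_of_ne_of_ne (by omega) (by omega)]
        exact ih'.1 j hj1 (by omega)
      · rw [hst, Equiv.Perm.mul_apply, Equiv.swap_apply_right]
        rw [ih'.1 (k - (m' + 1)) (by omega) (by omega),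
          hw1 (k - (m' + 1)) (by omega) (by omega)]
        omega
      · rw [hst, Equiv.Perm.mul_apply, Equiv.swap_apply_of_ne_of_ne (by omega) (by omega)]
        exact ih'.2.2
  constructor
  · intro m hm1 hm2
    rw [hstep m hm1]
    apply invCount_consec (n + 1) (k - m) k (y (m - 1)) (by omega) (by omega) (by omega)
    have h1 := (hval (m - 1) (by omega)).2.1
    have h2 := (hval (m - 1) (by omega)).1 (k - m) (by omega) (by omega)
    rw [h1, h2, hw1 (k - m) (by omega) (by omega)]
    omega
  · apply invCount_adj (n + 1) k (y (k - 1)) hk1 (by omega)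
    have h1 := (hval (k - 1) (le_refl _)).2.1
    have h2 := (hval (k - 1) (le_refl _)).2.2
    rw [h1, h2]
    omega
end

section
/- Let n ≥ 1 and let π_i (1 ≤ i ≤ n) be the Demazure operators π_i(f) = f + ((1−y_i)/(y_i − y_{i+1}))(f − s_i f) on ℤ[y_1^{±1}, …, y_{n+1}^{±1}]. Then the π_i satisfy the braid relations of S_{n+1}: π_i π_{i+1} π_i = π_{i+1} π_i π_{i+1} for 1 ≤ i ≤ n−1, and π_i π_j = π_j π_i whenever |i − j| ≥ 2. Consequently, for w ∈ S_{n+1} the operator π_w := π_{i_1}⋯π_{i_l} is independent of the choice of reduced expression w = s_{i_1}⋯s_{i_l}. -/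
set_option maxHeartbeats 1000000
set_option synthInstance.maxHeartbeats 1000000

/-- The Laurent polynomial ring `ℤ[y_1^{±1}, …, y_{n+1}^{±1}]`. -/
abbrev LaurentRing (n : ℕ) := AddMonoidAlgebra ℤ (Fin (n + 1) →₀ ℤ)

/-- The variable `y_{a+1}` for `a : Fin (n+1)`. -/
noncomputable def yv (n : ℕ) (a : Fin (n + 1)) : LaurentRing n :=
  AddMonoidAlgebra.single (Finsupp.single a 1) 1

/-- The action of `s_i`, exchanging the variables indexed by `i.castSucc` and `i.succ`. -/
noncomputable def sAct (n : ℕ) (i : Fin n) : LaurentRing n → LaurentRing n :=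
  fun f => AddMonoidAlgebra.ofCoeff
    (Finsupp.equivMapDomain (Finsupp.equivCongrLeft (Equiv.swap i.castSucc i.succ)) f.coeff)

/-- The simple transposition `s_i ∈ S_{n+1}` (on `Fin (n+1)`). -/
def sF (n : ℕ) (i : Fin n) : Equiv.Perm (Fin (n + 1)) := Equiv.swap i.castSucc i.succ

/-- The number of inversions (the length) of `w ∈ S_{n+1}`. -/
def invCountF (n : ℕ) (w : Equiv.Perm (Fin (n + 1))) : ℕ :=
  (Finset.univ.filter fun p : Fin (n + 1) × Fin (n + 1) => p.1 < p.2 ∧ w p.2 < w p.1).card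

instance (n : ℕ) : IsDomain (LaurentRing n) := NoZeroDivisors.to_isDomain _

/- ### Abstract Demazure relations over a commutative ring -/
section
variable {K : Type*} [CommRing K] (σ τ : K →+* K) (p q r : K)

/-- The abstract Demazure-type operator. -/
def Dop (σ : K →+* K) (p : K) (h : K) : K := h + p * (h - σ h)

theorem dem_braid
    (hσσ : ∀ g, σ (σ g) = g) (hττ : ∀ g, τ (τ g) = g)
    (hbr : ∀ g, σ (τ (σ g)) = τ (σ (τ g)))
    (hσp : σ p = -1 - p) (hτq : τ q = -1 - q)
    (hσq : σ q = r) (hτp : τ p = r) (hσr : σ r = q) (hτr : τ r = p)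
    (hR : (1+p)*(1+q) = (1+r)*(1+p+q))
    (g : K) :
    Dop σ p (Dop τ q (Dop σ p g)) = Dop τ q (Dop σ p (Dop τ q g)) := by
  simp only [Dop, map_add, map_sub, map_mul, hσp, hτq, hσq, hτp, hσr, hτr, hσσ, hττ]
  rw [hbr g]
  linear_combination ((p - q) * g - p * (σ g) + q * (τ g)) * hR

theorem dem_comm
    (hcm : ∀ g, σ (τ g) = τ (σ g))
    (hσq : σ q = q) (hτp : τ p = p)
    (g : K) :
    Dop σ p (Dop τ q g) = Dop τ q (Dop σ p g) := by
  simp only [Dop, map_add, map_sub, map_mul, hσq, hτp]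
  rw [hcm g]
  ring
end

/- ### The ring automorphisms and the fraction field -/

noncomputable def pAlg (n : ℕ) (e : Equiv.Perm (Fin (n + 1))) :
    LaurentRing n ≃ₐ[ℤ] LaurentRing n :=
  AddMonoidAlgebra.domCongr ℤ ℤ (Finsupp.domCongr e)

lemma sAct_eq (n : ℕ) (i : Fin n) (f : LaurentRing n) :
    sAct n i f = pAlg n (Equiv.swap i.castSucc i.succ) f := by
  ext m; simp [sAct, pAlg]

lemma pAlg_single (n : ℕ) (e : Equiv.Perm (Fin (n+1))) (m : Fin (n+1) →₀ ℤ) (c : ℤ) :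
    pAlg n e (AddMonoidAlgebra.single m c) =
      AddMonoidAlgebra.single (Finsupp.equivMapDomain e m) c := by
  simp [pAlg, AddMonoidAlgebra.domCongr_single]

lemma pAlg_yv (n : ℕ) (e : Equiv.Perm (Fin (n+1))) (a : Fin (n+1)) :
    pAlg n e (yv n a) = yv n (e a) := by
  rw [yv, pAlg_single, Finsupp.equivMapDomain_single, yv]

lemma pAlg_comp (n : ℕ) (e e' : Equiv.Perm (Fin (n+1))) (f : LaurentRing n) :
    pAlg n e (pAlg n e' f) = pAlg n (e * e') f := by
  have key : ∀ m c, pAlg n e (pAlg n e' (AddMonoidAlgebra.single m c))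
      = pAlg n (e * e') (AddMonoidAlgebra.single m c) := by
    intro m c
    simp only [pAlg_single]
    congr 1
    ext t
    rfl
  induction f using AddMonoidAlgebra.induction_linear with
  | zero => simp
  | add f g hf hg => simp only [map_add, hf, hg]
  | single m c => exact key m c

lemma pAlg_one (n : ℕ) (f : LaurentRing n) : pAlg n 1 f = f := by
  induction f using AddMonoidAlgebra.induction_linear with
  | zero => simp
  | add f g hf hg => simp only [map_add, hf, hg]
  | single m c =>
    rw [pAlg_single]
    congr 1
    ext t
    rfl

lemma yv_sub_ne (n : ℕ) {a b : Fin (n+1)} (h : a ≠ b) : yv n a - yv n b ≠ 0 := by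
  intro hc
  have h0 : (yv n a - yv n b).coeff (Finsupp.single a 1) = 0 := by rw [hc]; rfl
  rw [AddMonoidAlgebra.coeff_sub, Finsupp.sub_apply] at h0
  rw [yv, yv] at h0
  have h' : (Finsupp.single b 1 : Fin (n+1) →₀ ℤ) ≠ Finsupp.single a 1 :=
    fun hc2 => h ((Finsupp.single_left_injective (by norm_num : (1:ℤ) ≠ 0)) hc2).symm
  simp only [AddMonoidAlgebra.coeff_single, Finsupp.single_eq_same,
    Finsupp.single_eq_of_ne h'.symm] at h0
  omega

abbrev KK (n : ℕ) := FractionRing (LaurentRing n)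
noncomputable def ι (n : ℕ) : LaurentRing n →+* KK n := algebraMap _ _

lemma ι_inj (n : ℕ) : Function.Injective (ι n) :=
  IsFractionRing.injective (LaurentRing n) (KK n)

noncomputable def SK (n : ℕ) (e : Equiv.Perm (Fin (n+1))) : KK n →+* KK n :=
  IsLocalization.lift (M := nonZeroDivisors (LaurentRing n))
    (g := (ι n).comp (pAlg n e : LaurentRing n →ₐ[ℤ] LaurentRing n).toRingHom)
    (by
      intro y
      have hy : (y : LaurentRing n) ≠ 0 := nonZeroDivisors.ne_zero y.2
      have h2 : pAlg n e (y : LaurentRing n) ≠ 0 := fun hc => hy (by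
        simpa using (pAlg n e).injective (hc.trans (map_zero _).symm))
      have h3 : ι n (pAlg n e (y : LaurentRing n)) ≠ 0 := fun hc =>
        h2 (ι_inj n (by simpa using hc))
      exact isUnit_iff_ne_zero.mpr h3)

lemma SK_ι (n : ℕ) (e : Equiv.Perm (Fin (n+1))) (f : LaurentRing n) :
    SK n e (ι n f) = ι n (pAlg n e f) :=
  IsLocalization.lift_eq _ f

lemma SK_comp (n : ℕ) (e e' : Equiv.Perm (Fin (n+1))) (g : KK n) :
    SK n e (SK n e' g) = SK n (e * e') g := by
  have h : (SK n e).comp (SK n e') = SK n (e * e') := by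
    refine IsLocalization.ringHom_ext (nonZeroDivisors (LaurentRing n))
      (RingHom.ext fun f => ?_)
    simp only [RingHom.comp_apply]
    rw [show (algebraMap (LaurentRing n) (KK n)) f = ι n f from rfl,
      SK_ι, SK_ι, SK_ι, pAlg_comp]
  exact congrFun (congrArg (fun h => h.toFun) h) g

lemma SK_one (n : ℕ) (g : KK n) : SK n 1 g = g := by
  have h : SK n 1 = RingHom.id (KK n) := by
    refine IsLocalization.ringHom_ext (nonZeroDivisors (LaurentRing n))
      (RingHom.ext fun f => ?_)
    simp only [RingHom.comp_apply, RingHom.id_apply]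
    rw [show (algebraMap (LaurentRing n) (KK n)) f = ι n f from rfl, SK_ι, pAlg_one]
  rw [h]; rfl

noncomputable def XX (n : ℕ) (a : Fin (n+1)) : KK n := ι n (yv n a)

lemma SK_X (n : ℕ) (e : Equiv.Perm (Fin (n+1))) (a : Fin (n+1)) :
    SK n e (XX n a) = XX n (e a) := by
  rw [XX, SK_ι, pAlg_yv]; rfl

lemma XX_sub_ne (n : ℕ) {a b : Fin (n+1)} (h : a ≠ b) : XX n a - XX n b ≠ 0 := by
  rw [XX, XX, ← map_sub]
  intro hc
  exact yv_sub_ne n h (ι_inj n (by simpa using hc))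

/-- Transfer: the hypothesis on `π` pins down its image in the fraction field. -/
lemma piK (n : ℕ) (π : Fin n → LaurentRing n → LaurentRing n)
    (hπ : ∀ i f, (yv n i.castSucc - yv n i.succ) * (π i f - f) =
      (1 - yv n i.castSucc) * (f - sAct n i f)) (i : Fin n) (f : LaurentRing n) :
    ι n (π i f) = Dop (SK n (Equiv.swap i.castSucc i.succ))
      ((1 - XX n i.castSucc) / (XX n i.castSucc - XX n i.succ)) (ι n f) := by
  have hne : XX n i.castSucc - XX n i.succ ≠ 0 :=
    XX_sub_ne n (by simp [Fin.ext_iff])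
  have him := congrArg (ι n) (hπ i f)
  rw [map_mul, map_mul, map_sub, map_sub, map_sub, map_sub, map_one, sAct_eq, ← SK_ι] at him
  rw [Dop]
  have : (XX n i.castSucc - XX n i.succ) * (ι n (π i f) - ι n f) =
      (1 - XX n i.castSucc) * (ι n f - SK n (Equiv.swap i.castSucc i.succ) (ι n f)) := him
  field_simp
  linear_combination this

/- ### swap identities -/
lemma swap_braid {α : Type*} [DecidableEq α] {a b c : α}
    (hab : a ≠ b) (hac : a ≠ c) (hbc : b ≠ c) :
    Equiv.swap a b * Equiv.swap b c * Equiv.swap a b =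
      Equiv.swap b c * Equiv.swap a b * Equiv.swap b c := by
  have h1 : Equiv.swap b a * Equiv.swap c b * Equiv.swap b a = Equiv.swap a c :=
    Equiv.swap_mul_swap_mul_swap (fun h => hbc h.symm) (fun h => hac h.symm)
  have h2 : Equiv.swap b c * Equiv.swap a b * Equiv.swap b c = Equiv.swap c a :=
    Equiv.swap_mul_swap_mul_swap hab hac
  rw [Equiv.swap_comm a b, Equiv.swap_comm b c] at *
  rw [h1, h2, Equiv.swap_comm]

lemma swap_disj_comm {α : Type*} [DecidableEq α] {a b c d : α}
    (hac : a ≠ c) (had : a ≠ d) (hbc : b ≠ c) (hbd : b ≠ d) :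
    Equiv.swap a b * Equiv.swap c d = Equiv.swap c d * Equiv.swap a b := by
  ext x
  simp only [Equiv.Perm.mul_apply, Equiv.swap_apply_def]
  split_ifs <;> simp_all

/- ### Braid relation for π -/
theorem pi_braid (n : ℕ) (π : Fin n → LaurentRing n → LaurentRing n)
    (hπ : ∀ i f, (yv n i.castSucc - yv n i.succ) * (π i f - f) =
      (1 - yv n i.castSucc) * (f - sAct n i f))
    (i j : Fin n) (hij : (i : ℕ) + 1 = (j : ℕ)) (f : LaurentRing n) :
    π i (π j (π i f)) = π j (π i (π j f)) := by
  set a := i.castSucc with ha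
  set b := i.succ with hb
  set c := j.succ with hc
  have hbj : b = j.castSucc := by simp [hb, Fin.ext_iff, ← hij]
  have hab : a ≠ b := by simp [ha, hb, Fin.ext_iff]
  have hbc : b ≠ c := by simp [hb, hc, Fin.ext_iff]; omega
  have hac : a ≠ c := by simp [ha, hc, Fin.ext_iff]; omega
  have hXab : XX n a - XX n b ≠ 0 := XX_sub_ne n hab
  have hXbc : XX n b - XX n c ≠ 0 := XX_sub_ne n hbc
  have hXac : XX n a - XX n c ≠ 0 := XX_sub_ne n hac
  have hXba : XX n b - XX n a ≠ 0 := fun h => hXab (by linear_combination -h)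
  have hXcb : XX n c - XX n b ≠ 0 := fun h => hXbc (by linear_combination -h)
  have hXca : XX n c - XX n a ≠ 0 := fun h => hXac (by linear_combination -h)
  set σ := SK n (Equiv.swap a b) with hσ
  set τ := SK n (Equiv.swap b c) with hτ
  set p := (1 - XX n a) / (XX n a - XX n b) with hp
  set q := (1 - XX n b) / (XX n b - XX n c) with hq
  set r := (1 - XX n a) / (XX n a - XX n c) with hr
  apply ι_inj n
  have hπi := piK n π hπ i
  have hπj := piK n π hπ j
  rw [← ha, ← hb] at hπi
  rw [← hbj, ← hc] at hπj
  rw [hπi, hπj, hπi, hπj, hπi, hπj]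
  have hσσ : ∀ g, σ (σ g) = g := fun g => by
    rw [hσ, SK_comp, Equiv.swap_mul_self, SK_one]
  have hττ : ∀ g, τ (τ g) = g := fun g => by
    rw [hτ, SK_comp, Equiv.swap_mul_self, SK_one]
  have hbr : ∀ g, σ (τ (σ g)) = τ (σ (τ g)) := fun g => by
    rw [hσ, hτ, SK_comp, SK_comp, SK_comp, SK_comp, swap_braid hab hac hbc]
  have hσa : σ (XX n a) = XX n b := by rw [hσ, SK_X, Equiv.swap_apply_left]
  have hσb : σ (XX n b) = XX n a := by rw [hσ, SK_X, Equiv.swap_apply_right]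
  have hσc : σ (XX n c) = XX n c := by
    rw [hσ, SK_X, Equiv.swap_apply_of_ne_of_ne (fun h => hac h.symm) (fun h => hbc h.symm)]
  have hτa : τ (XX n a) = XX n a := by
    rw [hτ, SK_X, Equiv.swap_apply_of_ne_of_ne hab hac]
  have hτb : τ (XX n b) = XX n c := by rw [hτ, SK_X, Equiv.swap_apply_left]
  have hτc : τ (XX n c) = XX n b := by rw [hτ, SK_X, Equiv.swap_apply_right]
  apply dem_braid σ τ p q r hσσ hττ hbr
  · rw [hp, map_div₀, map_sub, map_sub, map_one, hσa, hσb]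
    field_simp
    ring
  · rw [hq, map_div₀, map_sub, map_sub, map_one, hτb, hτc]
    field_simp
    ring
  · rw [hq, map_div₀, map_sub, map_sub, map_one, hσb, hσc, hr]
  · rw [hp, map_div₀, map_sub, map_sub, map_one, hτa, hτb, hr]
  · rw [hr, map_div₀, map_sub, map_sub, map_one, hσa, hσc, hq]
  · rw [hr, map_div₀, map_sub, map_sub, map_one, hτa, hτc, hp]
  · rw [hp, hq, hr]
    field_simp
    ring

theorem pi_comm (n : ℕ) (π : Fin n → LaurentRing n → LaurentRing n)
    (hπ : ∀ i f, (yv n i.castSucc - yv n i.succ) * (π i f - f) =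
      (1 - yv n i.castSucc) * (f - sAct n i f))
    (i j : Fin n) (hij : (i : ℕ) + 2 ≤ (j : ℕ) ∨ (j : ℕ) + 2 ≤ (i : ℕ)) (f : LaurentRing n) :
    π i (π j f) = π j (π i f) := by
  set a := i.castSucc with ha
  set b := i.succ with hb
  set c := j.castSucc with hc
  set d := j.succ with hd
  have hac : a ≠ c := by simp [ha, hc, Fin.ext_iff]; omega
  have had : a ≠ d := by simp [ha, hd, Fin.ext_iff]; omega
  have hbc : b ≠ c := by simp [hb, hc, Fin.ext_iff]; omega
  have hbd : b ≠ d := by simp [hb, hd, Fin.ext_iff]; omega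
  set σ := SK n (Equiv.swap a b) with hσ
  set τ := SK n (Equiv.swap c d) with hτ
  set p := (1 - XX n a) / (XX n a - XX n b) with hp
  set q := (1 - XX n c) / (XX n c - XX n d) with hq
  apply ι_inj n
  have hπi := piK n π hπ i
  have hπj := piK n π hπ j
  rw [← ha, ← hb] at hπi
  rw [← hc, ← hd] at hπj
  rw [hπi, hπj, hπj, hπi]
  have hcm : ∀ g, σ (τ g) = τ (σ g) := fun g => by
    rw [hσ, hτ, SK_comp, SK_comp, swap_disj_comm hac had hbc hbd]
  have hσq : σ q = q := by
    rw [hq, map_div₀, map_sub, map_sub, map_one, hσ, SK_X, SK_X,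
      Equiv.swap_apply_of_ne_of_ne (fun h => hac h.symm) (fun h => hbc h.symm),
      Equiv.swap_apply_of_ne_of_ne (fun h => had h.symm) (fun h => hbd h.symm)]
  have hτp : τ p = p := by
    rw [hp, map_div₀, map_sub, map_sub, map_one, hτ, SK_X, SK_X,
      Equiv.swap_apply_of_ne_of_ne hac had, Equiv.swap_apply_of_ne_of_ne hbc hbd]
  exact dem_comm σ τ p q hcm hσq hτp (ι n f)

lemma swap_lt {m : ℕ} {a b : Fin m} (hab : (a:ℕ)+1 = (b:ℕ)) {u v : Fin m}
    (h1 : ¬(u = a ∧ v = b)) (h2 : ¬(u = b ∧ v = a)) :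
    (Equiv.swap a b u < Equiv.swap a b v ↔ u < v) := by
  have h1' : ¬((u:ℕ) = (a:ℕ) ∧ (v:ℕ) = (b:ℕ)) := by simpa [Fin.ext_iff] using h1
  have h2' : ¬((u:ℕ) = (b:ℕ) ∧ (v:ℕ) = (a:ℕ)) := by simpa [Fin.ext_iff] using h2
  simp only [Equiv.swap_apply_def, Fin.lt_def, Fin.ext_iff, apply_ite (Fin.val)]
  split_ifs <;> omega

lemma invCount_one (n : ℕ) : invCountF n 1 = 0 := by
  rw [invCountF, Finset.card_eq_zero, Finset.filter_eq_empty_iff]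
  rintro p -
  simp only [Equiv.Perm.one_apply]
  rintro ⟨h1, h2⟩
  exact absurd h2 (lt_asymm h1)

lemma step_up (n : ℕ) (i : Fin n) (w : Equiv.Perm (Fin (n+1)))
    (h : w⁻¹ i.castSucc < w⁻¹ i.succ) :
    invCountF n (sF n i * w) = invCountF n w + 1 := by
  classical
  set a := i.castSucc with ha
  set b := i.succ with hb
  have hab : (a:ℕ)+1 = (b:ℕ) := by simp [ha, hb]
  set x := w⁻¹ a with hx
  set y := w⁻¹ b with hy
  have hwx : w x = a := w.apply_symm_apply a
  have hwy : w y = b := w.apply_symm_apply b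
  have hkey : (Finset.univ.filter
        fun p : Fin (n+1) × Fin (n+1) => p.1 < p.2 ∧ (sF n i * w) p.2 < (sF n i * w) p.1)
      = insert (x, y) (Finset.univ.filter
        fun p : Fin (n+1) × Fin (n+1) => p.1 < p.2 ∧ w p.2 < w p.1) := by
    ext ⟨p1, p2⟩
    rw [Finset.mem_filter]
    simp only [Finset.mem_insert, Finset.mem_filter, Finset.mem_univ, true_and,
      Prod.mk.injEq, Equiv.Perm.mul_apply]
    simp only [sF]
    constructor
    · rintro ⟨hlt, hinv⟩
      by_cases hpx : p1 = x ∧ p2 = y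
      · exact Or.inl hpx
      · refine Or.inr ⟨hlt, ?_⟩
        rw [swap_lt hab ?_ ?_] at hinv
        · exact hinv
        · rintro ⟨e1, e2⟩
          have hp2 : p2 = x := by rw [hx, ← e1, Equiv.Perm.coe_inv, w.symm_apply_apply]
          have hp1 : p1 = y := by rw [hy, ← e2, Equiv.Perm.coe_inv, w.symm_apply_apply]
          rw [hp1, hp2] at hlt
          exact absurd (h.trans hlt) (lt_irrefl _)
        · rintro ⟨e1, e2⟩
          have hp2 : p2 = y := by rw [hy, ← e1, Equiv.Perm.coe_inv, w.symm_apply_apply]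
          have hp1 : p1 = x := by rw [hx, ← e2, Equiv.Perm.coe_inv, w.symm_apply_apply]
          exact hpx ⟨hp1, hp2⟩
    · rintro (⟨hp1, hp2⟩ | ⟨hlt, hinv⟩)
      · subst hp1; subst hp2
        refine ⟨h, ?_⟩
        rw [hwx, hwy, Equiv.swap_apply_left, Equiv.swap_apply_right]
        exact Fin.lt_def.mpr (by omega)
      · refine ⟨hlt, ?_⟩
        rw [swap_lt hab ?_ ?_]
        · exact hinv
        · rintro ⟨e1, e2⟩
          have hp2 : p2 = x := by rw [hx, ← e1, Equiv.Perm.coe_inv, w.symm_apply_apply]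
          have hp1 : p1 = y := by rw [hy, ← e2, Equiv.Perm.coe_inv, w.symm_apply_apply]
          rw [hp1, hp2] at hlt
          exact absurd (h.trans hlt) (lt_irrefl _)
        · rintro ⟨e1, e2⟩
          have hp2 : p2 = y := by rw [hy, ← e1, Equiv.Perm.coe_inv, w.symm_apply_apply]
          have hp1 : p1 = x := by rw [hx, ← e2, Equiv.Perm.coe_inv, w.symm_apply_apply]
          rw [hp1, hp2] at hinv
          rw [hwx, hwy] at hinv
          exact absurd hinv (not_lt.mpr (le_of_lt (Fin.lt_def.mpr (by omega))))
  have hnotmem : (x, y) ∉ (Finset.univ.filter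
      fun p : Fin (n+1) × Fin (n+1) => p.1 < p.2 ∧ w p.2 < w p.1) := by
    simp only [Finset.mem_filter, Finset.mem_univ, true_and, not_and]
    intro _
    rw [hwx, hwy]
    exact not_lt.mpr (le_of_lt (Fin.lt_def.mpr (by omega)))
  rw [invCountF, hkey, Finset.card_insert_of_notMem hnotmem, invCountF]

lemma sF_mul_self (n : ℕ) (i : Fin n) : sF n i * sF n i = 1 := by
  rw [sF, Equiv.swap_mul_self]

lemma sF_inv_apply (n : ℕ) (i : Fin n) (w : Equiv.Perm (Fin (n+1))) (v : Fin (n+1)) :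
    (sF n i * w)⁻¹ v = w⁻¹ (sF n i v) := by
  rw [mul_inv_rev, Equiv.Perm.mul_apply, sF, Equiv.swap_inv]

lemma step_down (n : ℕ) (i : Fin n) (w : Equiv.Perm (Fin (n+1)))
    (h : w⁻¹ i.succ < w⁻¹ i.castSucc) :
    invCountF n (sF n i * w) + 1 = invCountF n w := by
  have h2 := step_up n i (sF n i * w) (by
    rw [sF_inv_apply, sF_inv_apply, sF, Equiv.swap_apply_left, Equiv.swap_apply_right]
    exact h)
  rw [← mul_assoc, sF_mul_self, one_mul] at h2
  omega

lemma inv_ne (n : ℕ) (i : Fin n) (w : Equiv.Perm (Fin (n+1))) :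
    w⁻¹ i.castSucc ≠ w⁻¹ i.succ := by
  intro hc
  have : i.castSucc = i.succ := w⁻¹.injective hc
  simp [Fin.ext_iff] at this

lemma step_cases (n : ℕ) (i : Fin n) (w : Equiv.Perm (Fin (n+1))) :
    (w⁻¹ i.castSucc < w⁻¹ i.succ ∧ invCountF n (sF n i * w) = invCountF n w + 1) ∨
    (w⁻¹ i.succ < w⁻¹ i.castSucc ∧ invCountF n (sF n i * w) + 1 = invCountF n w) := by
  rcases lt_or_gt_of_ne (inv_ne n i w) with h | h
  · exact Or.inl ⟨h, step_up n i w h⟩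
  · exact Or.inr ⟨h, step_down n i w h⟩

lemma prod_le (n : ℕ) (L : List (Fin n)) :
    invCountF n ((L.map (sF n)).prod) ≤ L.length := by
  induction L with
  | nil => simp [invCount_one]
  | cons i L ih =>
    rw [List.map_cons, List.prod_cons, List.length_cons]
    rcases step_cases n i ((L.map (sF n)).prod) with ⟨-, h⟩ | ⟨-, h⟩ <;> omega

lemma strictMono_eq_one {m : ℕ} (w : Equiv.Perm (Fin (m+1))) (hw : StrictMono w) :
    w = 1 := by
  have key : ∀ (f : Fin (m+1) → Fin (m+1)), StrictMono f → ∀ k : Fin (m+1), (k : ℕ) ≤ (f k : ℕ) := by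
    intro f hf k
    induction k using Fin.induction with
    | zero => simp
    | succ k ih =>
      have h2 : f k.castSucc < f k.succ := hf (Fin.castSucc_lt_succ (i := k))
      have h3 := Fin.lt_def.mp h2
      have h4 : (k.castSucc : ℕ) = (k : ℕ) := rfl
      have h5 : (k.succ : ℕ) = (k : ℕ) + 1 := rfl
      omega
  have hinv : StrictMono (w⁻¹ : Equiv.Perm (Fin (m+1))) := by
    intro u v huv
    rcases lt_trichotomy (w⁻¹ u) (w⁻¹ v) with h | h | h
    · exact h
    · exact absurd (w⁻¹.injective (by rw [h]) : u = v) (ne_of_lt huv)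
    · have := hw h
      rw [Equiv.Perm.coe_inv, w.apply_symm_apply, w.apply_symm_apply] at this
      exact absurd (this.trans huv) (lt_irrefl _)
  ext k
  have h1 := key w hw k
  have h2 := key (w⁻¹ : Equiv.Perm (Fin (m+1))) hinv (w k)
  rw [show ((w⁻¹ : Equiv.Perm (Fin (m+1))) (w k)) = k from w.symm_apply_apply k] at h2
  simp only [Equiv.Perm.one_apply]
  omega

lemma invCount_zero (n : ℕ) (w : Equiv.Perm (Fin (n+1))) (h : invCountF n w = 0) :
    w = 1 := by
  apply strictMono_eq_one
  intro u v huv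
  rcases lt_trichotomy (w u) (w v) with h2 | h2 | h2
  · exact h2
  · exact absurd (w.injective h2) (ne_of_lt huv)
  · exfalso
    rw [invCountF, Finset.card_eq_zero, Finset.filter_eq_empty_iff] at h
    exact h (Finset.mem_univ (u, v)) ⟨huv, h2⟩

lemma exists_desc (n : ℕ) (w : Equiv.Perm (Fin (n+1))) (hw : w ≠ 1) :
    ∃ i : Fin n, w⁻¹ i.succ < w⁻¹ i.castSucc := by
  by_contra hc
  push_neg at hc
  have hmono : StrictMono (w⁻¹ : Equiv.Perm (Fin (n+1))) := by
    rw [Fin.strictMono_iff_lt_succ]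
    intro i
    rcases lt_or_gt_of_ne (inv_ne n i w) with h | h
    · exact h
    · exact absurd h (not_lt.mpr (hc i))
  have := strictMono_eq_one _ hmono
  exact hw (by simpa using congrArg (·⁻¹) this)

lemma exists_word (n : ℕ) : ∀ N (w : Equiv.Perm (Fin (n+1))), invCountF n w = N →
    ∃ L : List (Fin n), (L.map (sF n)).prod = w ∧ L.length = N := by
  intro N
  induction N using Nat.strong_induction_on with
  | _ N ih =>
    intro w hN
    rcases Nat.eq_zero_or_pos N with h0 | h0
    · subst h0
      exact ⟨[], by simp [invCount_zero n w hN]⟩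
    · have hw : w ≠ 1 := fun hc => by rw [hc, invCount_one] at hN; omega
      obtain ⟨i, hi⟩ := exists_desc n w hw
      have hstep := step_down n i w hi
      obtain ⟨M, hM1, hM2⟩ := ih (invCountF n (sF n i * w)) (by omega) (sF n i * w) rfl
      refine ⟨i :: M, ?_, ?_⟩
      · rw [List.map_cons, List.prod_cons, hM1, ← mul_assoc, sF_mul_self, one_mul]
      · rw [List.length_cons]; omega

lemma swap_braid' {α : Type*} [DecidableEq α] {a b c : α}
    (hab : a ≠ b) (hac : a ≠ c) (hbc : b ≠ c) :
    Equiv.swap a b * Equiv.swap b c * Equiv.swap a b =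
      Equiv.swap b c * Equiv.swap a b * Equiv.swap b c := by
  have h1 : Equiv.swap b a * Equiv.swap c b * Equiv.swap b a = Equiv.swap a c :=
    Equiv.swap_mul_swap_mul_swap (fun h => hbc h.symm) (fun h => hac h.symm)
  have h2 : Equiv.swap b c * Equiv.swap a b * Equiv.swap b c = Equiv.swap c a :=
    Equiv.swap_mul_swap_mul_swap hab hac
  rw [Equiv.swap_comm a b, Equiv.swap_comm b c] at *
  rw [h1, h2, Equiv.swap_comm]

lemma swap_disj_comm' {α : Type*} [DecidableEq α] {a b c d : α}
    (hac : a ≠ c) (had : a ≠ d) (hbc : b ≠ c) (hbd : b ≠ d) :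
    Equiv.swap a b * Equiv.swap c d = Equiv.swap c d * Equiv.swap a b := by
  ext x
  simp only [Equiv.Perm.mul_apply, Equiv.swap_apply_def]
  split_ifs <;> simp_all

lemma sF_braid (n : ℕ) (i j : Fin n) (hij : (i:ℕ)+1 = (j:ℕ)) :
    sF n i * sF n j * sF n i = sF n j * sF n i * sF n j := by
  have hbj : i.succ = j.castSucc := Fin.ext (by simp [← hij])
  have hab : i.castSucc ≠ i.succ := by simp [Fin.ext_iff]
  have hac : i.castSucc ≠ j.succ := by simp [Fin.ext_iff]; omega
  have hbc : i.succ ≠ j.succ := by simp [Fin.ext_iff]; omega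
  have hab' : i.castSucc ≠ j.castSucc := by rw [← hbj]; exact hab
  have hbc' : j.castSucc ≠ j.succ := by rw [← hbj]; exact hbc
  rw [sF, sF, hbj]
  exact swap_braid' hab' hac hbc'

lemma sF_comm (n : ℕ) (i j : Fin n) (hij : (i:ℕ)+2 ≤ (j:ℕ) ∨ (j:ℕ)+2 ≤ (i:ℕ)) :
    sF n i * sF n j = sF n j * sF n i := by
  have hac : i.castSucc ≠ j.castSucc := by simp [Fin.ext_iff]; omega
  have had : i.castSucc ≠ j.succ := by simp [Fin.ext_iff]; omega
  have hbc : i.succ ≠ j.castSucc := by simp [Fin.ext_iff]; omega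
  have hbd : i.succ ≠ j.succ := by simp [Fin.ext_iff]; omega
  exact swap_disj_comm' hac had hbc hbd

lemma adj_aux (n : ℕ) (N : ℕ) (w : Equiv.Perm (Fin (n+1))) (hN : invCountF n w = N)
    (i j : Fin n) (hij : (i:ℕ)+1 = (j:ℕ))
    (hdi : w⁻¹ i.succ < w⁻¹ i.castSucc) (hdj : w⁻¹ j.succ < w⁻¹ j.castSucc) :
    ∃ M : List (Fin n),
      (((j :: i :: M).map (sF n)).prod = sF n i * w ∧ (j :: i :: M).length = N - 1) ∧
      (((i :: j :: M).map (sF n)).prod = sF n j * w ∧ (i :: j :: M).length = N - 1) ∧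
      3 ≤ N := by
  have hbj : i.succ = j.castSucc := Fin.ext (by simp [← hij])
  have hab : i.castSucc ≠ i.succ := by simp [Fin.ext_iff]
  have hac : i.castSucc ≠ j.succ := by simp [Fin.ext_iff]; omega
  have hbc : i.succ ≠ j.succ := by simp [Fin.ext_iff]; omega
  have hdj' : w⁻¹ j.succ < w⁻¹ i.succ := by rw [hbj]; exact hdj
  set u := sF n i * w with hu
  have e1 : invCountF n u + 1 = N := by rw [hu, ← hN]; exact step_down n i w hdi
  have hacast : i.castSucc ≠ j.castSucc := by rw [← hbj]; exact hab
  have cancel : ∀ (k : Fin n) (v : Equiv.Perm (Fin (n+1))), sF n k * (sF n k * v) = v :=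
    fun k v => by rw [← mul_assoc, sF_mul_self, one_mul]
  -- descent of u at j
  have hdu : u⁻¹ j.succ < u⁻¹ j.castSucc := by
    simp only [hu, sF_inv_apply]
    have hs1 : sF n i j.succ = j.succ :=
      Equiv.swap_apply_of_ne_of_ne (fun h => hac h.symm) (fun h => hbc h.symm)
    have hs2 : sF n i j.castSucc = i.castSucc := by
      rw [← hbj]; exact Equiv.swap_apply_right _ _
    rw [hs1, hs2]
    exact hdj'.trans hdi
  set t2 := sF n j * u with ht2
  have e2 : invCountF n t2 + 1 = invCountF n u := by rw [ht2]; exact step_down n j u hdu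
  -- descent of t2 at i
  have hdt2 : t2⁻¹ i.succ < t2⁻¹ i.castSucc := by
    simp only [ht2, hu, sF_inv_apply]
    have hs1 : sF n j i.succ = j.succ := by rw [hbj]; exact Equiv.swap_apply_left _ _
    have hs2 : sF n i j.succ = j.succ :=
      Equiv.swap_apply_of_ne_of_ne (fun h => hac h.symm) (fun h => hbc h.symm)
    have hs3 : sF n j i.castSucc = i.castSucc :=
      Equiv.swap_apply_of_ne_of_ne hacast hac
    have hs4 : sF n i i.castSucc = i.succ := Equiv.swap_apply_left _ _
    rw [hs1, hs2, hs3, hs4]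
    exact hdj'
  set t3 := sF n i * t2 with ht3
  have e3 : invCountF n t3 + 1 = invCountF n t2 := by rw [ht3]; exact step_down n i t2 hdt2
  obtain ⟨M, hM1, hM2⟩ := exists_word n (invCountF n t3) t3 rfl
  have hbr := sF_braid n i j hij
  refine ⟨M, ⟨?_, ?_⟩, ⟨?_, ?_⟩, by omega⟩
  · rw [List.map_cons, List.map_cons, List.prod_cons, List.prod_cons, hM1, ht3, ht2]
    simp only [cancel]
  · simp only [List.length_cons]; omega
  · rw [List.map_cons, List.map_cons, List.prod_cons, List.prod_cons, hM1, ht3, ht2, hu]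
    have key : sF n i * (sF n j * (sF n i * (sF n j * (sF n i * w)))) =
        (sF n i * sF n j * sF n i * sF n j * sF n i) * w := by
      simp only [mul_assoc]
    rw [key, hbr]
    simp only [mul_assoc]
    simp only [cancel]
  · simp only [List.length_cons]; omega

theorem fold_eq {A : Type*} (n : ℕ) (π : Fin n → A → A)
    (rel_braid : ∀ i j : Fin n, (i : ℕ) + 1 = (j : ℕ) →
      ∀ f, π i (π j (π i f)) = π j (π i (π j f)))
    (rel_comm : ∀ i j : Fin n, (i : ℕ) + 2 ≤ (j : ℕ) ∨ (j : ℕ) + 2 ≤ (i : ℕ) →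
      ∀ f, π i (π j f) = π j (π i f)) :
    ∀ N (w : Equiv.Perm (Fin (n+1))), invCountF n w = N →
      ∀ L L' : List (Fin n),
      (L.map (sF n)).prod = w → L.length = N →
      (L'.map (sF n)).prod = w → L'.length = N →
      ∀ f, L.foldr (fun i g => π i g) f = L'.foldr (fun i g => π i g) f := by
  intro N
  induction N using Nat.strong_induction_on with
  | _ N ih =>
    intro w hN L L' hL hLl hL' hLl' f
    match L, L' with
    | [], [] => rfl
    | [], (j :: L₁') => simp at hLl hLl'; omega
    | (i :: L₁), [] => simp at hLl hLl'; omega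
    | (i :: L₁), (j :: L₁') =>
      simp only [List.map_cons, List.prod_cons] at hL hL'
      simp only [List.length_cons] at hLl hLl'
      set u := (L₁.map (sF n)).prod with hu
      set u' := (L₁'.map (sF n)).prod with hu'
      have huw : u = sF n i * w := by rw [← hL, ← mul_assoc, sF_mul_self, one_mul]
      have huw' : u' = sF n j * w := by rw [← hL', ← mul_assoc, sF_mul_self, one_mul]
      -- both are reduced, w has descents at i and j
      have hule : invCountF n u ≤ N - 1 := by
        have h := prod_le n L₁; rw [← hu] at h; omega
      have hdi : w⁻¹ i.succ < w⁻¹ i.castSucc ∧ invCountF n u = N - 1 := by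
        rcases step_cases n i w with ⟨h1, h2⟩ | ⟨h1, h2⟩
        · rw [← huw] at h2; omega
        · rw [← huw] at h2; exact ⟨h1, by omega⟩
      have hule' : invCountF n u' ≤ N - 1 := by
        have h := prod_le n L₁'; rw [← hu'] at h; omega
      have hdj : w⁻¹ j.succ < w⁻¹ j.castSucc ∧ invCountF n u' = N - 1 := by
        rcases step_cases n j w with ⟨h1, h2⟩ | ⟨h1, h2⟩
        · rw [← huw'] at h2; omega
        · rw [← huw'] at h2; exact ⟨h1, by omega⟩
      simp only [List.foldr_cons]
      by_cases hijeq : i = j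
      · subst hijeq
        have : L₁.foldr (fun i g => π i g) f = L₁'.foldr (fun i g => π i g) f := by
          refine ih (N-1) (by omega) u hdi.2 L₁ L₁' rfl (by omega) ?_ (by omega) f
          rw [← hu']
          rw [huw, huw']
        rw [this]
      · have hijv : (i : ℕ) ≠ (j : ℕ) := fun h => hijeq (Fin.ext h)
        rcases (by omega : (i:ℕ)+1 = (j:ℕ) ∨ (j:ℕ)+1 = (i:ℕ) ∨
          ((i:ℕ)+2 ≤ (j:ℕ) ∨ (j:ℕ)+2 ≤ (i:ℕ))) with hadj | hadj | hfar
        · -- i + 1 = j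
          obtain ⟨M, ⟨hw1, hl1⟩, ⟨hw2, hl2⟩, hN3⟩ :=
            adj_aux n N w hN i j hadj hdi.1 hdj.1
          have hfold1 : L₁.foldr (fun i g => π i g) f =
              (j :: i :: M).foldr (fun i g => π i g) f :=
            ih (N-1) (by omega) u hdi.2 L₁ (j :: i :: M) rfl (by omega)
              (by rw [hw1, huw]) (by omega) f
          have hfold2 : L₁'.foldr (fun i g => π i g) f =
              (i :: j :: M).foldr (fun i g => π i g) f :=
            ih (N-1) (by omega) u' hdj.2 L₁' (i :: j :: M) rfl (by omega)
              (by rw [hw2, huw']) (by omega) f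
          rw [hfold1, hfold2]
          simp only [List.foldr_cons]
          exact rel_braid i j hadj _
        · -- j + 1 = i
          obtain ⟨M, ⟨hw1, hl1⟩, ⟨hw2, hl2⟩, hN3⟩ :=
            adj_aux n N w hN j i hadj hdj.1 hdi.1
          have hfold1 : L₁.foldr (fun i g => π i g) f =
              (j :: i :: M).foldr (fun i g => π i g) f :=
            ih (N-1) (by omega) u hdi.2 L₁ (j :: i :: M) rfl (by omega)
              (by rw [hw2, huw]) (by omega) f
          have hfold2 : L₁'.foldr (fun i g => π i g) f =
              (i :: j :: M).foldr (fun i g => π i g) f :=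
            ih (N-1) (by omega) u' hdj.2 L₁' (i :: j :: M) rfl (by omega)
              (by rw [hw1, huw']) (by omega) f
          rw [hfold1, hfold2]
          simp only [List.foldr_cons]
          exact (rel_braid j i hadj _).symm
        · -- |i - j| ≥ 2
          have hcm := sF_comm n i j hfar
          set t := sF n i * u' with ht
          have hdt : u'⁻¹ i.succ < u'⁻¹ i.castSucc := by
            have h1 : i.castSucc ≠ j.castSucc := by simp [Fin.ext_iff]; omega
            have h2 : i.castSucc ≠ j.succ := by simp [Fin.ext_iff]; omega
            have h3 : i.succ ≠ j.castSucc := by simp [Fin.ext_iff]; omega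
            have h4 : i.succ ≠ j.succ := by simp [Fin.ext_iff]; omega
            rw [huw', sF_inv_apply, sF_inv_apply, sF,
              Equiv.swap_apply_of_ne_of_ne h3 h4, Equiv.swap_apply_of_ne_of_ne h1 h2]
            exact hdi.1
          have et : invCountF n t + 1 = invCountF n u' := by
            rw [ht]; exact step_down n i u' hdt
          obtain ⟨M, hM1, hM2⟩ := exists_word n (invCountF n t) t rfl
          have cancel : ∀ (k : Fin n) (v : Equiv.Perm (Fin (n+1))),
              sF n k * (sF n k * v) = v :=
            fun k v => by rw [← mul_assoc, sF_mul_self, one_mul]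
          have hjM : ((j :: M).map (sF n)).prod = u := by
            rw [List.map_cons, List.prod_cons, hM1, ht, huw', huw]
            have key : sF n j * (sF n i * (sF n j * w)) =
                ((sF n j * sF n i) * sF n j) * w := by simp only [mul_assoc]
            rw [key, ← hcm]
            simp only [mul_assoc]
            simp only [cancel]
          have hiM : ((i :: M).map (sF n)).prod = u' := by
            rw [List.map_cons, List.prod_cons, hM1, ht]
            simp only [cancel]
          have hfold1 : L₁.foldr (fun i g => π i g) f =
              (j :: M).foldr (fun i g => π i g) f :=
            ih (N-1) (by omega) u hdi.2 L₁ (j :: M) rfl (by omega) hjM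
              (by simp only [List.length_cons]; omega) f
          have hfold2 : L₁'.foldr (fun i g => π i g) f =
              (i :: M).foldr (fun i g => π i g) f :=
            ih (N-1) (by omega) u' hdj.2 L₁' (i :: M) rfl (by omega) hiM
              (by simp only [List.length_cons]; omega) f
          rw [hfold1, hfold2]
          simp only [List.foldr_cons]
          exact rel_comm i j hfar _

/-- The Demazure operators `π_i` (characterized by the divided-difference identity
`(y_i − y_{i+1})(π_i f − f) = (1 − y_i)(f − s_i f)`) satisfy the braid relations of
`S_{n+1}`; consequently, for two reduced words of the same `w ∈ S_{n+1}` the corresponding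
composites `π_{i_1} ⋯ π_{i_l}` agree. -/
theorem stmt13 (n : ℕ) (hn : 1 ≤ n)
    (π : Fin n → LaurentRing n → LaurentRing n)
    (hπ : ∀ i f, (yv n i.castSucc - yv n i.succ) * (π i f - f) =
      (1 - yv n i.castSucc) * (f - sAct n i f)) :
    (∀ i j : Fin n, (i : ℕ) + 1 = (j : ℕ) →
      ∀ f, π i (π j (π i f)) = π j (π i (π j f))) ∧
    (∀ i j : Fin n, (i : ℕ) + 2 ≤ (j : ℕ) ∨ (j : ℕ) + 2 ≤ (i : ℕ) →
      ∀ f, π i (π j f) = π j (π i f)) ∧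
    (∀ L L' : List (Fin n),
      (L.map (sF n)).prod = (L'.map (sF n)).prod →
      L.length = invCountF n (L.map (sF n)).prod →
      L'.length = invCountF n (L'.map (sF n)).prod →
      ∀ f, L.foldr (fun i g => π i g) f = L'.foldr (fun i g => π i g) f) := by
  refine ⟨fun i j hij f => pi_braid n π hπ i j hij f,
    fun i j hij f => pi_comm n π hπ i j hij f, ?_⟩
  intro L L' hp h1 h2 f
  exact fold_eq n π (fun i j h f => pi_braid n π hπ i j h f)
    (fun i j h f => pi_comm n π hπ i j h f)
    L.length ((L.map (sF n)).prod) h1.symm L L' rfl rfl hp.symm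
    (by rw [h2, ← hp]; exact h1.symm) f
end
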